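/- arXiv:1105.2431 — 8 statements merged into one kernel-verified Lean document; each statement's English description precedes it below -/
import Mathlib

section
/- Let n ≥ 3 be an integer and let ω, ω′ be arbitrary positive real numbers (playing the roles of the volumes ω_n, ω_{n−1} of the n- and (n−1)-dimensional unit spheres). For j = 1, …, m define d_j = [2(β_j − α_j)P_j/(ω′(n−2))]^{1/(n−2)} and b_j = [(β_j − α_j)P_j/(ω α_j)]^{1/n}, and then set σ_j = ((n−2)/2)·d_j^{n−2}·ω′/(b_j^n·ω) and ρ_j = b_j^n·ω. Then for every j = 1, …, m one has σ_j = α_j and ρ_j = (β_j − α_j)P_j/α_j, and for every k = 1, …, m one has 1 + ∑_{j=1}^m σ_j ρ_j/(σ_j − β_k) = 0; that is, each β_k is a root of the function 𝓕(λ) = 1 + ∑_{j=1}^m σ_j ρ_j/(σ_j − λ). -/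
/-!
Once `σ_j = α_j` and `σ_j ρ_j = c_j := (β_j - α_j) P_j` are computed,
`𝓕(λ) = 1 + ∑ c_j / (α_j - λ)`. The `-c_j` are the residues at the `α_j` of
`∏ (λ - β_i) / ∏ (λ - α_i)`, whose numerator and denominator are monic of the same degree;
Lagrange interpolation of their difference at the nodes `α_i` is the partial fraction expansion
showing that `𝓕` equals this rational function, which vanishes at every `β_k`. Interlacing keeps
the `α_j` distinct and away from the `β_k`, and makes every `P_j` positive, so that the real powers
defining `d_j` and `b_j` can be undone.
-/

open Finset Polynomial Lagrange

namespace Lagrange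

variable {F ι : Type*} [Field F] [DecidableEq ι] {s : Finset ι} {a b : ι → F}

theorem eval_nodal_eq_mul_one_add_sum (ha : Set.InjOn a s) {x : F} (hx : ∀ i ∈ s, x ≠ a i) :
    eval x (nodal s b) = eval x (nodal s a) *
      (1 + ∑ i ∈ s, nodalWeight s a i * (x - a i)⁻¹ * eval (a i) (nodal s b)) := by
  have hdeg : (nodal s b - nodal s a).degree < #s := by
    rw [← degree_nodal (v := b)]
    refine degree_sub_lt_left (by rw [degree_nodal, degree_nodal]) nodal_ne_zero ?_
    rw [nodal_monic.leadingCoeff, nodal_monic.leadingCoeff]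
  have hinterp := congrArg (eval x) (eq_interpolate ha hdeg)
  rw [eval_interpolate_not_at_node _ hx, eval_sub] at hinterp
  have hvalues :
      ∑ i ∈ s, nodalWeight s a i * (x - a i)⁻¹ * eval (a i) (nodal s b - nodal s a) =
      ∑ i ∈ s, nodalWeight s a i * (x - a i)⁻¹ * eval (a i) (nodal s b) :=
    sum_congr rfl fun i hi => by rw [eval_sub, eval_nodal_at_node hi, sub_zero]
  rw [hvalues] at hinterp
  linear_combination hinterp

theorem nodalWeight_mul_eval_nodal {j : ι} (hj : j ∈ s) :
    nodalWeight s a j * eval (a j) (nodal s b) =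
      (a j - b j) * ∏ i ∈ s.erase j, (b i - a j) / (a i - a j) := by
  rw [nodalWeight, eval_nodal, ← mul_prod_erase s _ hj, mul_left_comm, ← prod_mul_distrib]
  congr 1
  refine prod_congr rfl fun i _ => ?_
  rw [← neg_div_neg_eq, neg_sub, neg_sub, div_eq_inv_mul]

theorem one_add_sum_div_eq_zero (ha : Set.InjOn a s) {k : ι} (hk : k ∈ s)
    (hbk : ∀ i ∈ s, b k ≠ a i) :
    1 + ∑ j ∈ s, (b j - a j) * (∏ i ∈ s.erase j, (b i - a j) / (a i - a j)) / (a j - b k) =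
      0 := by
  have h := eval_nodal_eq_mul_one_add_sum (b := b) ha hbk
  rw [eval_nodal_at_node hk, eq_comm, mul_eq_zero] at h
  rw [← h.resolve_left (eval_nodal_not_at_node hbk)]
  congr 1
  refine sum_congr rfl fun j hj => ?_
  rw [mul_right_comm, nodalWeight_mul_eval_nodal hj, ← neg_sub (a j) (b k), inv_neg]
  ring

end Lagrange

structure Interlacing {K : Type*} [LT K] (m : ℕ) (α β : ℕ → K) : Prop where
  left_lt_right : ∀ j, j < m → α j < β j
  right_lt_left_succ : ∀ j, j + 1 < m → β j < α (j + 1)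

namespace Interlacing

variable {K : Type*} {m : ℕ} {α β : ℕ → K} {i j : ℕ}

section Preorder

variable [Preorder K]

theorem right_lt_left (h : Interlacing m α β) (hij : i < j) (hj : j < m) : β i < α j := by
  induction j, hij using Nat.le_induction with
  | base => exact h.right_lt_left_succ i hj
  | succ j _ ih =>
    exact (ih (by omega)).trans ((h.left_lt_right j (by omega)).trans (h.right_lt_left_succ j hj))

theorem left_lt_left (h : Interlacing m α β) (hij : i < j) (hj : j < m) : α i < α j :=
  (h.left_lt_right i (hij.trans hj)).trans (h.right_lt_left hij hj)

theorem injOn_left (h : Interlacing m α β) : Set.InjOn α (range m) := by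
  rw [coe_range]
  exact StrictMonoOn.injOn fun i _ j hj hij => h.left_lt_left hij hj

theorem left_pos [Zero K] (h : Interlacing m α β) (h0 : 0 < α 0) (hj : j < m) : 0 < α j := by
  rcases j.eq_zero_or_pos with rfl | hj0
  · exact h0
  · exact h0.trans (h.left_lt_left hj0 hj)

theorem left_lt_right_of_le (h : Interlacing m α β) (hij : i ≤ j) (hj : j < m) :
    α i < β j := by
  rcases hij.eq_or_lt with rfl | hij
  · exact h.left_lt_right i hj
  · exact (h.left_lt_left hij hj).trans (h.left_lt_right j hj)

theorem right_ne_left (h : Interlacing m α β) (hi : i < m) (hj : j < m) : β i ≠ α j := by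
  rcases lt_or_ge i j with hij | hji
  · exact (h.right_lt_left hij hj).ne
  · exact (h.left_lt_right_of_le hji hi).ne'

end Preorder

theorem prod_div_pos [Field K] [LinearOrder K] [IsStrictOrderedRing K] (h : Interlacing m α β)
    (hj : j < m) :
    0 < ∏ i ∈ (range m).erase j, (β i - α j) / (α i - α j) := by
  refine prod_pos fun i hi => ?_
  obtain ⟨hij, hi⟩ := mem_erase.1 hi
  rw [mem_range] at hi
  rcases hij.lt_or_gt with hij | hji
  · exact div_pos_of_neg_of_neg (sub_neg.2 (h.right_lt_left hij hj))
      (sub_neg.2 (h.left_lt_left hij hj))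
  · exact div_pos (sub_pos.2 (h.left_lt_right_of_le hji.le hi))
      (sub_pos.2 (h.left_lt_left hji hi))

end Interlacing

theorem gaps_parameters_choice_higher_dim_general
    (m : ℕ) (n : ℕ) (hn : 3 ≤ n)
    (ω ω' : ℝ) (hω : 0 < ω) (hω' : 0 < ω')
    (α β : ℕ → ℝ)
    (hα0 : 0 < α 0)
    (hαβ : ∀ j, j < m → α j < β j)
    (hβα : ∀ j, j + 1 < m → β j < α (j + 1))
    (P d b σ ρ : ℕ → ℝ)
    (hP : ∀ j, P j = ∏ i ∈ (Finset.range m).erase j, (β i - α j) / (α i - α j))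
    (hd : ∀ j, d j =
      (2 * (β j - α j) * P j / (ω' * ((n : ℝ) - 2))) ^ ((1 : ℝ) / ((n : ℝ) - 2)))
    (hb : ∀ j, b j = ((β j - α j) * P j / (ω * α j)) ^ ((1 : ℝ) / (n : ℝ)))
    (hσ : ∀ j, σ j = (((n : ℝ) - 2) / 2) * (d j ^ ((n : ℝ) - 2)) * ω' / ((b j ^ (n : ℝ)) * ω))
    (hρ : ∀ j, ρ j = b j ^ (n : ℝ) * ω) :
    (∀ j, j < m → σ j = α j ∧ ρ j = (β j - α j) * P j / α j) ∧
    (∀ k, k < m → 1 + ∑ j ∈ Finset.range m, σ j * ρ j / (σ j - β k) = 0) := by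
  have hn2 : (0 : ℝ) < n - 2 := by linarith [show (3 : ℝ) ≤ n by exact_mod_cast hn]
  have hI : Interlacing m α β := ⟨hαβ, hβα⟩
  have hσρ : ∀ j, j < m → σ j = α j ∧ ρ j = (β j - α j) * P j / α j := by
    intro j hj
    have hα := hI.left_pos hα0 hj
    have hc : 0 < (β j - α j) * P j :=
      mul_pos (sub_pos.2 (hαβ j hj)) (hP j ▸ hI.prod_div_pos hj)
    have hbn : b j ^ (n : ℝ) = (β j - α j) * P j / (ω * α j) := by
      rw [hb j, one_div, Real.rpow_inv_rpow (by positivity) (by positivity)]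
    have hdn : d j ^ ((n : ℝ) - 2) = 2 * (β j - α j) * P j / (ω' * ((n : ℝ) - 2)) := by
      rw [hd j, one_div, Real.rpow_inv_rpow (by rw [mul_assoc]; positivity) hn2.ne']
    constructor
    · rw [hσ j, hdn, hbn]
      field_simp
      exact div_self hc.ne'
    · rw [hρ j, hbn]
      field_simp
  refine ⟨hσρ, fun k hk => ?_⟩
  have hterms :
      ∀ j ∈ range m, σ j * ρ j / (σ j - β k) = (β j - α j) * P j / (α j - β k) := by
    intro j hj
    obtain ⟨hσj, hρj⟩ := hσρ j (mem_range.1 hj)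
    rw [hσj, hρj, mul_div_cancel₀ _ (hI.left_pos hα0 (mem_range.1 hj)).ne']
  rw [sum_congr rfl hterms]
  simp only [hP]
  exact Lagrange.one_add_sum_div_eq_zero hI.injOn_left (mem_range.2 hk)
    fun i hi => hI.right_ne_left hk (mem_range.1 hi)

theorem gaps_parameters_choice_higher_dim
    (m : ℕ) (hm : 1 ≤ m) (n : ℕ) (hn : 3 ≤ n)
    (ω ω' : ℝ) (hω : 0 < ω) (hω' : 0 < ω')
    (α β : ℕ → ℝ)
    (hα0 : 0 < α 0)
    (hαβ : ∀ j, j < m → α j < β j)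
    (hβα : ∀ j, j + 1 < m → β j < α (j + 1))
    (P d b σ ρ : ℕ → ℝ)
    (hP : ∀ j, P j = ∏ i ∈ (Finset.range m).erase j, (β i - α j) / (α i - α j))
    (hd : ∀ j, d j =
      (2 * (β j - α j) * P j / (ω' * ((n : ℝ) - 2))) ^ ((1 : ℝ) / ((n : ℝ) - 2)))
    (hb : ∀ j, b j = ((β j - α j) * P j / (ω * α j)) ^ ((1 : ℝ) / (n : ℝ)))
    (hσ : ∀ j, σ j = (((n : ℝ) - 2) / 2) * (d j ^ ((n : ℝ) - 2)) * ω' / ((b j ^ (n : ℝ)) * ω))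
    (hρ : ∀ j, ρ j = b j ^ (n : ℝ) * ω) :
    (∀ j, j < m → σ j = α j ∧ ρ j = (β j - α j) * P j / α j) ∧
    (∀ k, k < m → 1 + ∑ j ∈ Finset.range m, σ j * ρ j / (σ j - β k) = 0) :=
  gaps_parameters_choice_higher_dim_general m n hn ω ω' hω hω' α β hα0 hαβ hβα P d b σ ρ hP hd hb hσ
    hρ
end

section
/- The linear system of m equations ∑_{j=1}^m α_j ρ_j/(β_k − α_j) = 1 (k = 1, …, m) in the unknowns ρ₁, …, ρ_m has a unique solution, and this solution is given by ρ_j = ((β_j − α_j)/α_j) · ∏_{i=1,…,m, i≠j} (β_i − α_j)/(α_i − α_j) for j = 1, …, m. -/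
/-!
Put `x j = α j * ρ j`, `N = ∏ (X - α i)`, `B = ∏ (X - β i)` and `L j = N / (X - α j)`.
Since `L j (β k) = N (β k) / (β k - α j)`, the system says that the polynomial `∑ x j • L j`
agrees with `N - B` at the `m` distinct nodes `β k`; both have degree `< m`, so this is the
identity `∑ x j • L j = N - B`. Evaluating instead at the nodes `α j`, where all `L i` with
`i ≠ j` vanish, the identity is equivalent to `x j * L j (α j) = -B (α j)` for every `j`,
which is the product formula.
-/

open Polynomial Finset Lagrange

section CauchySystem

variable {K ι : Type*} [Field K] [DecidableEq ι] {s : Finset ι} {α β : ι → K}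

theorem eval_sum_C_mul_nodal_erase_of_ne (x : ι → K) {z : K} (hz : ∀ j ∈ s, z ≠ α j) :
    (∑ j ∈ s, C (x j) * nodal (s.erase j) α).eval z =
      (nodal s α).eval z * ∑ j ∈ s, x j / (z - α j) := by
  rw [eval_finsetSum, mul_sum]
  refine sum_congr rfl fun j hj => ?_
  rw [nodal_eq_mul_nodal_erase hj, eval_mul, eval_mul, eval_C, eval_sub, eval_X, eval_C]
  field_simp [sub_ne_zero.2 (hz j hj)]

theorem eval_sum_C_mul_nodal_erase_at_node (x : ι → K) {j : ι} (hj : j ∈ s) :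
    (∑ i ∈ s, C (x i) * nodal (s.erase i) α).eval (α j) =
      x j * (nodal (s.erase j) α).eval (α j) := by
  rw [eval_finsetSum, sum_eq_single_of_mem j hj fun i _ hij => ?_, eval_mul, eval_C]
  rw [eval_mul, eval_nodal_at_node (mem_erase.2 ⟨hij.symm, hj⟩), mul_zero]

theorem degree_sum_C_mul_nodal_erase_sub_lt (x : ι → K) :
    (∑ j ∈ s, C (x j) * nodal (s.erase j) α - (nodal s α - nodal s β)).degree < #s := by
  have hsum : ∑ j ∈ s, C (x j) * nodal (s.erase j) α ∈ degreeLT K #s := by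
    refine Submodule.sum_mem _ fun j hj => ?_
    rw [← smul_eq_C_mul]
    refine Submodule.smul_mem _ _ (mem_degreeLT.2 ?_)
    rw [degree_nodal, card_erase_of_mem hj]
    exact_mod_cast Nat.sub_lt (card_pos.2 ⟨j, hj⟩) one_pos
  have hnodal : nodal s α - nodal s β ∈ degreeLT K #s := by
    rw [mem_degreeLT, ← degree_nodal (v := α)]
    exact degree_sub_lt_left (by rw [degree_nodal, degree_nodal]) nodal_ne_zero
      (by rw [nodal_monic.leadingCoeff, nodal_monic.leadingCoeff])
  exact mem_degreeLT.1 (Submodule.sub_mem _ hsum hnodal)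

theorem sum_div_sub_eq_one_iff_sum_C_mul_nodal_erase_eq (hβ : Set.InjOn β s)
    (hβα : ∀ j ∈ s, ∀ k ∈ s, β k ≠ α j) (x : ι → K) :
    (∀ k ∈ s, ∑ j ∈ s, x j / (β k - α j) = 1) ↔
      ∑ j ∈ s, C (x j) * nodal (s.erase j) α = nodal s α - nodal s β := by
  have eval_iff : ∀ k ∈ s,
      (∑ j ∈ s, C (x j) * nodal (s.erase j) α).eval (β k) = (nodal s α - nodal s β).eval (β k) ↔
        ∑ j ∈ s, x j / (β k - α j) = 1 := by
    intro k hk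
    have hz : ∀ j ∈ s, β k ≠ α j := fun j hj => hβα j hj k hk
    rw [eval_sum_C_mul_nodal_erase_of_ne x hz, eval_sub, eval_nodal_at_node hk, sub_zero,
      mul_eq_left₀ (eval_nodal_not_at_node hz)]
  refine ⟨fun h => ?_, fun h k hk => (eval_iff k hk).1 (by rw [h])⟩
  exact eq_of_degree_sub_lt_of_eval_index_eq s hβ (degree_sum_C_mul_nodal_erase_sub_lt x)
    fun k hk => (eval_iff k hk).2 (h k hk)

theorem prod_mul_eval_nodal_erase_eq_neg_eval_nodal (hα : Set.InjOn α s) {j : ι} (hj : j ∈ s) :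
    (β j - α j) * (∏ i ∈ s.erase j, (β i - α j) / (α i - α j)) *
        (nodal (s.erase j) α).eval (α j) = -(nodal s β).eval (α j) := by
  have hfactor : ∀ i ∈ s.erase j, (β i - α j) / (α i - α j) * (α j - α i) = α j - β i := by
    intro i hi
    have hne : α i - α j ≠ 0 :=
      sub_ne_zero.2 fun h => (ne_of_mem_erase hi) (hα (mem_of_mem_erase hi) hj h)
    field_simp
    ring
  rw [eval_nodal, eval_nodal, ← mul_prod_erase s _ hj, mul_assoc, ← prod_mul_distrib,
    prod_congr rfl hfactor]
  ring

theorem sum_C_mul_nodal_erase_eq_iff (hα : Set.InjOn α s) (x : ι → K) :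
    ∑ j ∈ s, C (x j) * nodal (s.erase j) α = nodal s α - nodal s β ↔
      ∀ j ∈ s, x j = (β j - α j) * ∏ i ∈ s.erase j, (β i - α j) / (α i - α j) := by
  have eval_iff : ∀ j ∈ s,
      (∑ i ∈ s, C (x i) * nodal (s.erase i) α).eval (α j) = (nodal s α - nodal s β).eval (α j) ↔
        x j = (β j - α j) * ∏ i ∈ s.erase j, (β i - α j) / (α i - α j) := by
    intro j hj
    have hL : (nodal (s.erase j) α).eval (α j) ≠ 0 := eval_nodal_not_at_node fun i hi h =>
      (ne_of_mem_erase hi) (hα (mem_of_mem_erase hi) hj h.symm)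
    rw [eval_sum_C_mul_nodal_erase_at_node x hj, eval_sub, eval_nodal_at_node hj, zero_sub,
      ← prod_mul_eval_nodal_erase_eq_neg_eval_nodal hα hj, mul_left_inj' hL]
  refine ⟨fun h j hj => (eval_iff j hj).1 (by rw [h]), fun h => ?_⟩
  exact eq_of_degree_sub_lt_of_eval_index_eq s hα (degree_sum_C_mul_nodal_erase_sub_lt x)
    fun j hj => (eval_iff j hj).2 (h j hj)

theorem sum_div_sub_eq_one_iff (hα : Set.InjOn α s) (hβ : Set.InjOn β s)
    (hβα : ∀ j ∈ s, ∀ k ∈ s, β k ≠ α j) (x : ι → K) :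
    (∀ k ∈ s, ∑ j ∈ s, x j / (β k - α j) = 1) ↔
      ∀ j ∈ s, x j = (β j - α j) * ∏ i ∈ s.erase j, (β i - α j) / (α i - α j) :=
  (sum_div_sub_eq_one_iff_sum_C_mul_nodal_erase_eq hβ hβα x).trans
    (sum_C_mul_nodal_erase_eq_iff hα x)

end CauchySystem

section Interlacing

variable {R : Type*} [Preorder R] {m : ℕ} {α β : ℕ → R}

theorem strictMonoOn_left_of_interlace (hαβ : ∀ j, j < m → α j < β j)
    (hβα : ∀ j, j + 1 < m → β j < α (j + 1)) : StrictMonoOn α (Set.Iio m) :=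
  strictMonoOn_of_lt_succ Set.ordConnected_Iio fun a _ ha hsucc => by
    rw [Order.succ_eq_add_one] at hsucc ⊢
    exact (hαβ a ha).trans (hβα a hsucc)

theorem strictMonoOn_right_of_interlace (hαβ : ∀ j, j < m → α j < β j)
    (hβα : ∀ j, j + 1 < m → β j < α (j + 1)) : StrictMonoOn β (Set.Iio m) :=
  strictMonoOn_of_lt_succ Set.ordConnected_Iio fun a _ _ hsucc => by
    rw [Order.succ_eq_add_one] at hsucc ⊢
    exact (hβα a hsucc).trans (hαβ (a + 1) hsucc)

theorem ne_of_interlace (hαβ : ∀ j, j < m → α j < β j)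
    (hβα : ∀ j, j + 1 < m → β j < α (j + 1)) {j k : ℕ} (hj : j < m) (hk : k < m) :
    β k ≠ α j := by
  have hα := strictMonoOn_left_of_interlace hαβ hβα
  rcases le_or_gt j k with hjk | hkj
  · exact ((hα.monotoneOn hj hk hjk).trans_lt (hαβ k hk)).ne'
  · exact ((hβα k (by omega)).trans_le (hα.monotoneOn (Set.mem_Iio.2 (by omega)) hj hkj)).ne

end Interlacing

theorem linear_system_unique_solution_general
    (m : ℕ)
    (α β : ℕ → ℝ)
    (hα0 : 0 < α 0)
    (hαβ : ∀ j, j < m → α j < β j)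
    (hβα : ∀ j, j + 1 < m → β j < α (j + 1)) :
    ∀ ρ : ℕ → ℝ,
      (∀ k, k < m → ∑ j ∈ Finset.range m, α j * ρ j / (β k - α j) = 1) ↔
      (∀ j, j < m → ρ j = ((β j - α j) / α j) *
        ∏ i ∈ (Finset.range m).erase j, (β i - α j) / (α i - α j)) := by
  intro ρ
  have hα := strictMonoOn_left_of_interlace hαβ hβα
  have hβ := strictMonoOn_right_of_interlace hαβ hβα
  have hα_pos : ∀ j < m, 0 < α j := fun j hj =>
    hα0.trans_le (hα.monotoneOn (Set.mem_Iio.2 (by omega)) hj (Nat.zero_le j))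
  have hsystem := sum_div_sub_eq_one_iff (s := range m) (coe_range m ▸ hα.injOn)
    (coe_range m ▸ hβ.injOn)
    (fun j hj k hk => ne_of_interlace hαβ hβα (mem_range.1 hj) (mem_range.1 hk))
    (fun j => α j * ρ j)
  simp only [mem_range] at hsystem
  rw [hsystem]
  refine forall₂_congr fun j hj => ?_
  rw [div_mul_eq_mul_div, eq_div_iff (hα_pos j hj).ne', mul_comm]

theorem linear_system_unique_solution
    (m : ℕ) (hm : 1 ≤ m)
    (α β : ℕ → ℝ)
    (hα0 : 0 < α 0)
    (hαβ : ∀ j, j < m → α j < β j)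
    (hβα : ∀ j, j + 1 < m → β j < α (j + 1)) :
    ∀ ρ : ℕ → ℝ,
      (∀ k, k < m → ∑ j ∈ Finset.range m, α j * ρ j / (β k - α j) = 1) ↔
      (∀ j, j < m → ρ j = ((β j - α j) / α j) *
        ∏ i ∈ (Finset.range m).erase j, (β i - α j) / (α i - α j)) :=
  linear_system_unique_solution_general m α β hα0 hαβ hβα
end

section
/- Suppose N ≥ 2 and the positive real numbers ρ₁, …, ρ_N satisfy ∑_{j=1}^N α_j ρ_j/(β_k − α_j) = 1 for every k = 1, …, N. Define ρ̂_j = ρ_j (α_N − α_j)/(β_N − α_j) for j = 1, …, N−1. Then ∑_{j=1}^{N−1} α_j ρ̂_j/(β_k − α_j) = 1 for every k = 1, …, N−1, i.e. the numbers ρ̂₁, …, ρ̂_{N−1} solve the analogous system of size N−1 associated with α₁, β₁, …, α_{N−1}, β_{N−1}. -/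
/-!
Since `α_N - α_j = (β_N - α_j) - (β_N - α_N)`, partial fractions turn each term
`α_j ρ̂_j / (β_k - α_j)` into a combination of `α_j ρ_j / (β_k - α_j)` and `α_j ρ_j / (β_N - α_j)`
with coefficients independent of `j`. The reduced `k`-th sum is therefore a linear combination of
the `k`-th and `N`-th equations of the original system, in which the terms of the unknown `ρ_N`
cancel.
-/

open Finset

lemma mul_sub_div_div_eq {w x x₀ b c : ℝ} (hb : b - x ≠ 0) (hc : c - x ≠ 0) (hbc : c - b ≠ 0) :
    w * (x₀ - x) / (c - x) / (b - x) =
      w / (b - x) - (c - x₀) / (c - b) * (w / (b - x) - w / (c - x)) := by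
  field_simp
  ring

lemma sum_mul_sub_div_div_eq_one {ι : Type*} (s : Finset ι) (w x : ι → ℝ) {w₀ x₀ b c : ℝ}
    (hb : ∀ j ∈ s, b - x j ≠ 0) (hc : ∀ j ∈ s, c - x j ≠ 0)
    (hb₀ : b - x₀ ≠ 0) (hc₀ : c - x₀ ≠ 0) (hbc : c - b ≠ 0)
    (hsb : ∑ j ∈ s, w j / (b - x j) + w₀ / (b - x₀) = 1)
    (hsc : ∑ j ∈ s, w j / (c - x j) + w₀ / (c - x₀) = 1) :
    ∑ j ∈ s, w j * (x₀ - x j) / (c - x j) / (b - x j) = 1 := by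
  have hdiff : ∑ j ∈ s, w j / (b - x j) - ∑ j ∈ s, w j / (c - x j) =
      w₀ / (c - x₀) - w₀ / (b - x₀) := by linarith
  have hcancel : (c - x₀) / (c - b) * (w₀ / (c - x₀) - w₀ / (b - x₀)) = -(w₀ / (b - x₀)) := by
    field_simp
    ring
  rw [sum_congr rfl fun j hj => mul_sub_div_div_eq (hb j hj) (hc j hj) hbc, sum_sub_distrib,
    ← mul_sum, sum_sub_distrib, hdiff, hcancel]
  linarith

section Interlacing

variable {N : ℕ} {α β : ℕ → ℝ} (hαβ : ∀ j, j < N → α j < β j)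
  (hβα : ∀ j, j + 1 < N → β j < α (j + 1))
include hαβ hβα

lemma beta_lt_alpha_of_lt {i j : ℕ} (hij : i < j) (hj : j < N) : β i < α j := by
  induction j, hij using Nat.le_induction with
  | base => exact hβα i hj
  | succ j hij ih => exact (ih (by omega)).trans ((hαβ j (by omega)).trans (hβα j hj))

lemma alpha_lt_beta_of_le {i j : ℕ} (hji : j ≤ i) (hi : i < N) : α j < β i := by
  rcases hji.eq_or_lt with rfl | h
  · exact hαβ j hi
  · exact (hαβ j (by omega)).trans ((beta_lt_alpha_of_lt hαβ hβα h hi).trans (hαβ i hi))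

lemma beta_sub_alpha_ne_zero {i j : ℕ} (hi : i < N) (hj : j < N) : β i - α j ≠ 0 := by
  rcases le_or_gt j i with h | h
  · exact sub_ne_zero.mpr (alpha_lt_beta_of_le hαβ hβα h hi).ne'
  · exact sub_ne_zero.mpr (beta_lt_alpha_of_lt hαβ hβα h hj).ne

end Interlacing

theorem system_induction_step_general
    (N : ℕ)
    (α β : ℕ → ℝ)
    (hαβ : ∀ j, j < N → α j < β j)
    (hβα : ∀ j, j + 1 < N → β j < α (j + 1))
    (ρ : ℕ → ℝ)
    (hsys : ∀ k, k < N → ∑ j ∈ Finset.range N, α j * ρ j / (β k - α j) = 1)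
    (ρhat : ℕ → ℝ)
    (hρhat : ∀ j, j < N - 1 →
      ρhat j = ρ j * (α (N - 1) - α j) / (β (N - 1) - α j)) :
    ∀ k, k < N - 1 →
      ∑ j ∈ Finset.range (N - 1), α j * ρhat j / (β k - α j) = 1 := by
  intro k hk
  obtain ⟨n, rfl⟩ : ∃ n, N = n + 1 := ⟨N - 1, by omega⟩
  simp only [Nat.add_sub_cancel] at hk hρhat ⊢
  have hne {i j : ℕ} (hi : i ≤ n) (hj : j ≤ n) : β i - α j ≠ 0 :=
    beta_sub_alpha_ne_zero hαβ hβα (by omega) (by omega)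
  have hβk : β k < β n := (beta_lt_alpha_of_lt hαβ hβα hk (by omega)).trans (hαβ n (by omega))
  have hsys' (m : ℕ) (hm : m ≤ n) :
      ∑ j ∈ range n, α j * ρ j / (β m - α j) + α n * ρ n / (β m - α n) = 1 := by
    rw [← sum_range_succ]
    exact hsys m (by omega)
  rw [sum_congr rfl fun j hj => by rw [hρhat j (mem_range.mp hj), ← mul_div_assoc, ← mul_assoc]]
  exact sum_mul_sub_div_div_eq_one (range n) (fun j => α j * ρ j) α
    (fun j hj => hne hk.le (mem_range.mp hj).le) (fun j hj => hne le_rfl (mem_range.mp hj).le)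
    (hne hk.le le_rfl) (hne le_rfl le_rfl) (sub_ne_zero.mpr hβk.ne') (hsys' k hk.le)
    (hsys' n le_rfl)

theorem system_induction_step
    (N : ℕ) (hN : 2 ≤ N)
    (α β : ℕ → ℝ)
    (hα0 : 0 < α 0)
    (hαβ : ∀ j, j < N → α j < β j)
    (hβα : ∀ j, j + 1 < N → β j < α (j + 1))
    (ρ : ℕ → ℝ)
    (hρ : ∀ j, j < N → 0 < ρ j)
    (hsys : ∀ k, k < N → ∑ j ∈ Finset.range N, α j * ρ j / (β k - α j) = 1)
    (ρhat : ℕ → ℝ)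
    (hρhat : ∀ j, j < N - 1 →
      ρhat j = ρ j * (α (N - 1) - α j) / (β (N - 1) - α j)) :
    ∀ k, k < N - 1 →
      ∑ j ∈ Finset.range (N - 1), α j * ρhat j / (β k - α j) = 1 :=
  system_induction_step_general N α β hαβ hβα ρ hsys ρhat hρhat
end

section
/- The function 𝓕 has exactly m zeros on ℝ ∖ {σ₁, …, σ_m}: there exist real numbers μ₁, …, μ_m with 𝓕(μ_j) = 0 for every j, satisfying σ_j < μ_j < σ_{j+1} for j = 1, …, m−1 and σ_m < μ_m < ∞; moreover 𝓕(λ) ≠ 0 for every real λ ∉ {μ₁, …, μ_m} ∪ {σ₁, …, σ_m}. -/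
/-!
Each term `σⱼρⱼ / (σⱼ - λ)` is increasing on either side of its pole, so 𝓕 is strictly
increasing on every gap between consecutive poles. It tends to `-∞` just right of each pole,
to `+∞` just left of the next one and to `1` at `+∞`, so by the intermediate value theorem each
of the `m` gaps to the right of `σ₁` contains a zero, and by monotonicity only one. Left of all
poles every term is positive, so 𝓕 > 1 there.
-/

open Filter Set Topology

noncomputable def secularFunction {ι : Type*} (s : Finset ι) (a c : ι → ℝ) (x : ℝ) : ℝ :=
  1 + ∑ i ∈ s, c i / (a i - x)

lemma div_sub_lt_div_sub {a c x y : ℝ} (hc : 0 < c) (hxy : x < y) (ha : a < x ∨ y < a) :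
    c / (a - x) < c / (a - y) := by
  rcases ha with ha | ha
  · simp only [div_eq_mul_inv]
    exact mul_lt_mul_of_pos_left
      ((inv_lt_inv_of_neg (by linarith) (by linarith)).2 (by linarith)) hc
  · exact div_lt_div_of_pos_left hc (by linarith) (by linarith)

lemma tendsto_div_sub_nhdsGT {a c : ℝ} (hc : 0 < c) :
    Tendsto (fun x => c / (a - x)) (𝓝[>] a) atBot := by
  have h : Tendsto (fun x => a - x) (𝓝[>] a) (𝓝[<] 0) :=
    tendsto_nhdsWithin_iff.2 ⟨((continuous_sub_left a).tendsto' a 0 (sub_self a)).mono_left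
      nhdsWithin_le_nhds, eventually_nhdsWithin_of_forall fun _ hx => mem_Iio.2 (sub_neg.2 hx)⟩
  simpa only [div_eq_mul_inv, Function.comp_def] using
    (tendsto_inv_nhdsLT_zero.comp h).const_mul_atBot hc

lemma tendsto_div_sub_nhdsLT {a c : ℝ} (hc : 0 < c) :
    Tendsto (fun x => c / (a - x)) (𝓝[<] a) atTop := by
  have h : Tendsto (fun x => a - x) (𝓝[<] a) (𝓝[>] 0) :=
    tendsto_nhdsWithin_iff.2 ⟨((continuous_sub_left a).tendsto' a 0 (sub_self a)).mono_left
      nhdsWithin_le_nhds, eventually_nhdsWithin_of_forall fun _ hx => mem_Ioi.2 (sub_pos.2 hx)⟩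
  simpa only [div_eq_mul_inv, Function.comp_def] using
    (tendsto_inv_nhdsGT_zero.comp h).const_mul_atTop hc

section secularFunction

variable {ι : Type*} {s : Finset ι} {a c : ι → ℝ}

lemma secularFunction_pos (hc : ∀ i ∈ s, 0 < c i) {x : ℝ} (hx : ∀ i ∈ s, x < a i) :
    0 < secularFunction s a c x :=
  add_pos_of_pos_of_nonneg one_pos
    (Finset.sum_nonneg fun i hi => (div_pos (hc i hi) (sub_pos.2 (hx i hi))).le)

lemma secularFunction_strictMonoOn (hs : s.Nonempty) (hc : ∀ i ∈ s, 0 < c i) {I : Set ℝ}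
    (hI : I.OrdConnected) (ha : ∀ i ∈ s, a i ∉ I) :
    StrictMonoOn (secularFunction s a c) I := by
  intro x hx y hy hxy
  refine (add_lt_add_iff_left 1).2 (Finset.sum_lt_sum_of_nonempty hs fun i hi => ?_)
  refine div_sub_lt_div_sub (hc i hi) hxy ?_
  by_contra! h
  exact ha i hi (hI.out hx hy h)

lemma continuousAt_secularFunction {x : ℝ} (hx : ∀ i ∈ s, a i ≠ x) :
    ContinuousAt (secularFunction s a c) x :=
  continuousAt_const.add <| tendsto_finsetSum s fun i hi =>
    continuousAt_const.div (continuousAt_const.sub continuousAt_id) (sub_ne_zero.2 (hx i hi))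

lemma secularFunction_eq_erase_add [DecidableEq ι] {i : ι} (hi : i ∈ s) (x : ℝ) :
    secularFunction s a c x = secularFunction (s.erase i) a c x + c i / (a i - x) := by
  rw [secularFunction, secularFunction, ← Finset.add_sum_erase s _ hi]
  ring

lemma continuousAt_secularFunction_erase [DecidableEq ι] {i : ι} (hi : i ∈ s)
    (ha : InjOn a s) : ContinuousAt (secularFunction (s.erase i) a c) (a i) :=
  continuousAt_secularFunction fun _ hk =>
    ha.ne (Finset.mem_of_mem_erase hk) hi (Finset.ne_of_mem_erase hk)

lemma tendsto_secularFunction_nhdsGT {i : ι} (hi : i ∈ s) (ha : InjOn a s) (hc : 0 < c i) :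
    Tendsto (secularFunction s a c) (𝓝[>] (a i)) atBot := by
  classical
  have hrest := (continuousAt_secularFunction_erase (c := c) hi ha).tendsto
  exact ((hrest.mono_left nhdsWithin_le_nhds).add_atBot (tendsto_div_sub_nhdsGT hc)).congr
    fun x => (secularFunction_eq_erase_add hi x).symm

lemma tendsto_secularFunction_nhdsLT {i : ι} (hi : i ∈ s) (ha : InjOn a s) (hc : 0 < c i) :
    Tendsto (secularFunction s a c) (𝓝[<] (a i)) atTop := by
  classical
  have hrest := (continuousAt_secularFunction_erase (c := c) hi ha).tendsto
  exact ((hrest.mono_left nhdsWithin_le_nhds).add_atTop (tendsto_div_sub_nhdsLT hc)).congr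
    fun x => (secularFunction_eq_erase_add hi x).symm

lemma tendsto_secularFunction_atTop : Tendsto (secularFunction s a c) atTop (𝓝 1) := by
  have h : ∀ i ∈ s, Tendsto (fun x => c i / (a i - x)) atTop (𝓝 0) := fun i _ =>
    tendsto_const_nhds.div_atBot (tendsto_atBot_add_const_left _ _ tendsto_neg_atTop_atBot)
  unfold secularFunction
  simpa using tendsto_const_nhds.add (tendsto_finsetSum s h)

end secularFunction

def poleGap (m : ℕ) (a : ℕ → ℝ) (j : ℕ) : Set ℝ :=
  {x | a j < x ∧ (j + 1 < m → x < a (j + 1))}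

section poleGap

variable {m j : ℕ} {a : ℕ → ℝ}

lemma ordConnected_poleGap : (poleGap m a j).OrdConnected :=
  ⟨fun _ hx _ hy _ hz => ⟨hx.1.trans_le hz.1, fun h => hz.2.trans_lt (hy.2 h)⟩⟩

lemma poleGap_eq_Ioo (h : j + 1 < m) : poleGap m a j = Ioo (a j) (a (j + 1)) := by
  ext; simp [poleGap, h]

lemma poleGap_eq_Ioi (h : ¬j + 1 < m) : poleGap m a j = Ioi (a j) := by
  ext; simp [poleGap, h]

lemma notMem_poleGap (ha : StrictMonoOn a (Iio m)) (hj : j < m) {k : ℕ} (hk : k < m) :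
    a k ∉ poleGap m a j := by
  rintro ⟨hjk, hkj⟩
  rcases le_or_gt k j with h | h
  · exact (ha.monotoneOn hk hj h).not_gt hjk
  · exact (ha.monotoneOn (by omega : j + 1 < m) hk h).not_gt (hkj (by omega))

lemma exists_mem_poleGap {x : ℝ} (hx : ∀ k < m, x ≠ a k) (hlow : ∃ k < m, a k < x) :
    ∃ j < m, x ∈ poleGap m a j := by
  classical
  obtain ⟨k, hk, hkx⟩ := hlow
  obtain ⟨j, hj, hmax⟩ := ((Finset.range m).filter (a · < x)).exists_max_image id
    ⟨k, by simpa using ⟨hk, hkx⟩⟩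
  rw [Finset.mem_filter, Finset.mem_range] at hj
  refine ⟨j, hj.1, hj.2, fun h => lt_of_le_of_ne (not_lt.1 fun hlt => ?_) (hx _ h)⟩
  simpa using hmax (j + 1) (by simpa using ⟨h, hlt⟩)

variable {c : ℕ → ℝ}

lemma secularFunction_strictMonoOn_poleGap (ha : StrictMonoOn a (Iio m))
    (hc : ∀ i ∈ Finset.range m, 0 < c i) (hj : j < m) :
    StrictMonoOn (secularFunction (Finset.range m) a c) (poleGap m a j) :=
  secularFunction_strictMonoOn ⟨j, Finset.mem_range.2 hj⟩ hc ordConnected_poleGap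
    fun _ hk => notMem_poleGap ha hj (Finset.mem_range.1 hk)

lemma exists_secularFunction_eq_zero_mem_poleGap (ha : StrictMonoOn a (Iio m))
    (hc : ∀ i ∈ Finset.range m, 0 < c i) (hj : j < m) :
    ∃ x ∈ poleGap m a j, secularFunction (Finset.range m) a c x = 0 := by
  have hcont : ContinuousOn (secularFunction (Finset.range m) a c) (poleGap m a j) := fun x hx =>
    (continuousAt_secularFunction fun _ hk hkx =>
      notMem_poleGap ha hj (Finset.mem_range.1 hk) (by rwa [hkx])).continuousWithinAt
  have hinj : InjOn a (Finset.range m) := by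
    rw [Finset.coe_range]
    exact ha.injOn
  have hj' := Finset.mem_range.2 hj
  have hbot := tendsto_secularFunction_nhdsGT hj' hinj (hc j hj')
  by_cases h : j + 1 < m
  · rw [poleGap_eq_Ioo h] at hcont ⊢
    have hlt : a j < a (j + 1) := ha (mem_Iio.2 hj) (mem_Iio.2 h) j.lt_succ_self
    have h' := Finset.mem_range.2 h
    have htop := tendsto_secularFunction_nhdsLT h' hinj (hc _ h')
    exact isPreconnected_Ioo.intermediate_value_Iii (le_principal_iff.2 (Ioo_mem_nhdsGT hlt))
      (le_principal_iff.2 (Ioo_mem_nhdsLT hlt)) hcont hbot htop (mem_univ 0)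
  · rw [poleGap_eq_Ioi h] at hcont ⊢
    exact isPreconnected_Ioi.intermediate_value_Iio (le_principal_iff.2 self_mem_nhdsWithin)
      (le_principal_iff.2 (Ioi_mem_atTop _)) hcont hbot tendsto_secularFunction_atTop
      (mem_Iio.2 one_pos)

end poleGap

theorem F_has_exactly_m_zeros_general
    (m : ℕ)
    (σ ρ : ℕ → ℝ)
    (hσ0 : 0 < σ 0)
    (hσmono : ∀ j, j + 1 < m → σ j < σ (j + 1))
    (hρ : ∀ j, j < m → 0 < ρ j)
    (F : ℝ → ℝ)
    (hF : ∀ lam : ℝ, F lam = 1 + ∑ j ∈ Finset.range m, σ j * ρ j / (σ j - lam)) :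
    ∃ μ : ℕ → ℝ,
      (∀ j, j < m → F (μ j) = 0) ∧
      (∀ j, j < m → σ j < μ j) ∧
      (∀ j, j + 1 < m → μ j < σ (j + 1)) ∧
      (∀ lam : ℝ, (∀ j, j < m → lam ≠ σ j) → (∀ j, j < m → lam ≠ μ j) →
        F lam ≠ 0) := by
  obtain rfl : F = secularFunction (Finset.range m) σ (fun j => σ j * ρ j) := funext hF
  have hσ : StrictMonoOn σ (Iio m) :=
    strictMonoOn_of_lt_add_one ordConnected_Iio fun j _ _ hj => hσmono j hj
  have hc : ∀ j ∈ Finset.range m, 0 < σ j * ρ j := fun j hj => by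
    rw [Finset.mem_range] at hj
    exact mul_pos (hσ0.trans_le (hσ.monotoneOn (mem_Iio.2 (by omega)) hj j.zero_le)) (hρ j hj)
  choose! μ hμgap hμzero using fun j (hj : j < m) =>
    exists_secularFunction_eq_zero_mem_poleGap hσ hc hj
  refine ⟨μ, hμzero, fun j hj => (hμgap j hj).1, fun j hj => (hμgap j (by omega)).2 hj, ?_⟩
  intro x hxσ hxμ hx0
  by_cases hbelow : ∀ j < m, x < σ j
  · exact (secularFunction_pos hc fun j hj => hbelow j (Finset.mem_range.1 hj)).ne' hx0
  push Not at hbelow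
  obtain ⟨k, hk, hkx⟩ := hbelow
  obtain ⟨j, hj, hxj⟩ := exists_mem_poleGap hxσ ⟨k, hk, hkx.lt_of_ne (hxσ k hk).symm⟩
  exact hxμ j hj ((secularFunction_strictMonoOn_poleGap hσ hc hj).injOn hxj (hμgap j hj)
    (hx0.trans (hμzero j hj).symm))

theorem F_has_exactly_m_zeros
    (m : ℕ) (hm : 1 ≤ m)
    (σ ρ : ℕ → ℝ)
    (hσ0 : 0 < σ 0)
    (hσmono : ∀ j, j + 1 < m → σ j < σ (j + 1))
    (hρ : ∀ j, j < m → 0 < ρ j)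
    (F : ℝ → ℝ)
    (hF : ∀ lam : ℝ, F lam = 1 + ∑ j ∈ Finset.range m, σ j * ρ j / (σ j - lam)) :
    ∃ μ : ℕ → ℝ,
      (∀ j, j < m → F (μ j) = 0) ∧
      (∀ j, j < m → σ j < μ j) ∧
      (∀ j, j + 1 < m → μ j < σ (j + 1)) ∧
      (∀ lam : ℝ, (∀ j, j < m → lam ≠ σ j) → (∀ j, j < m → lam ≠ μ j) →
        F lam ≠ 0) :=
  F_has_exactly_m_zeros_general m σ ρ hσ0 hσmono hρ F hF
end

section
/- Let μ₁, …, μ_m be the zeros of 𝓕, numbered so that σ_j < μ_j < σ_{j+1} for j = 1, …, m−1 and σ_m < μ_m < ∞. Then {λ ∈ ℝ ∖ {σ₁, …, σ_m} : λ𝓕(λ) ≥ 0} = [0, σ₁) ∪ (⋃_{j=1}^{m−1} [μ_j, σ_{j+1})) ∪ [μ_m, ∞). -/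
/-!
On each interval between consecutive poles, and on `(σ_m, ∞)`, every summand `σ_j ρ_j / (σ_j - λ)`
is strictly increasing, so `𝓕` is strictly increasing there and changes sign exactly at its zero
`μ_j`; since `λ > 0` on these intervals, `λ 𝓕(λ) ≥ 0` iff `λ ≥ μ_j`. Below `σ₁` every summand is
positive, so `𝓕 > 0` and the sign of `λ 𝓕(λ)` is that of `λ`.
-/

open Set

lemma div_sub_lt_div_sub_s7 {c s a b : ℝ} (hc : 0 < c) (hab : a < b) (hs : s ∉ Icc a b) :
    c / (s - a) < c / (s - b) := by
  rcases lt_or_ge s a with hsa | has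
  · rw [← neg_sub a s, ← neg_sub b s, div_neg, div_neg, neg_lt_neg_iff]
    exact div_lt_div_of_pos_left hc (sub_pos.2 hsa) (sub_lt_sub_right hab s)
  · have hbs : b < s := not_le.1 fun hsb ↦ hs ⟨has, hsb⟩
    exact div_lt_div_of_pos_left hc (sub_pos.2 hbs) (sub_lt_sub_left hab s)

lemma strictMonoOn_sum_div_sub {ι : Type*} {s : Finset ι} (hs : s.Nonempty) {c σ : ι → ℝ}
    (hc : ∀ j ∈ s, 0 < c j) {I : Set ℝ} (hI : I.OrdConnected) (hσI : ∀ j ∈ s, σ j ∉ I) :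
    StrictMonoOn (fun x ↦ ∑ j ∈ s, c j / (σ j - x)) I := fun _ ha _ hb hab ↦
  Finset.sum_lt_sum_of_nonempty hs fun j hj ↦
    div_sub_lt_div_sub_s7 (hc j hj) hab fun hσj ↦ hσI j hj (hI.out ha hb hσj)

lemma one_add_sum_div_sub_pos {ι : Type*} {s : Finset ι} {c σ : ι → ℝ} (hc : ∀ j ∈ s, 0 ≤ c j)
    {x : ℝ} (hx : ∀ j ∈ s, x < σ j) : 0 < 1 + ∑ j ∈ s, c j / (σ j - x) :=
  add_pos_of_pos_of_nonneg one_pos <|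
    Finset.sum_nonneg fun j hj ↦ div_nonneg (hc j hj) (sub_pos.2 (hx j hj)).le

lemma nonneg_mul_iff_le_of_strictMonoOn {F : ℝ → ℝ} {I : Set ℝ} (hF : StrictMonoOn F I)
    (hI : I ⊆ Ioi 0) {μ x : ℝ} (hμ : μ ∈ I) (hFμ : F μ = 0) (hx : x ∈ I) :
    0 ≤ x * F x ↔ μ ≤ x := by
  rw [mul_nonneg_iff_of_pos_left (hI hx), ← hFμ, hF.le_iff_le hμ hx]

lemma exists_le_lt_succ_of_le_of_lt {σ : ℕ → ℝ} {x : ℝ} (h0 : σ 0 ≤ x) :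
    ∀ {n : ℕ}, x < σ n → ∃ j < n, σ j ≤ x ∧ x < σ (j + 1)
  | 0, hx => absurd h0 hx.not_ge
  | n + 1, hx => by
    by_cases hxn : x < σ n
    · obtain ⟨j, hj, hjx⟩ := exists_le_lt_succ_of_le_of_lt h0 hxn
      exact ⟨j, hj.trans n.lt_succ_self, hjx⟩
    · exact ⟨n, n.lt_succ_self, not_lt.1 hxn, hx⟩

section Poles

variable {m : ℕ} {σ : ℕ → ℝ}

lemma lt_or_exists_mem_Ioo_or_lt (hm : 1 ≤ m) {x : ℝ} (hx : ∀ j < m, x ≠ σ j) :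
    x < σ 0 ∨ (∃ j, j + 1 < m ∧ x ∈ Ioo (σ j) (σ (j + 1))) ∨ σ (m - 1) < x := by
  by_cases hlow : x < σ 0
  · exact Or.inl hlow
  by_cases htop : σ (m - 1) < x
  · exact Or.inr (Or.inr htop)
  obtain ⟨j, hj, hσj, hxσ⟩ := exists_le_lt_succ_of_le_of_lt (not_lt.1 hlow)
    ((not_lt.1 htop).lt_of_ne (hx _ (by omega)))
  exact Or.inr (Or.inl ⟨j, by omega, hσj.lt_of_ne (hx j (by omega)).symm, hxσ⟩)

lemma StrictMonoOn.apply_zero_le (hσ : StrictMonoOn σ (Iio m)) {k : ℕ} (hk : k < m) : σ 0 ≤ σ k :=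
  (hσ.le_iff_le (show 0 < m by omega) hk).2 k.zero_le

lemma StrictMonoOn.notMem_Ioo_succ (hσ : StrictMonoOn σ (Iio m)) {j k : ℕ} (hj : j + 1 < m)
    (hk : k < m) : σ k ∉ Ioo (σ j) (σ (j + 1)) := fun ⟨hjk, hkj⟩ ↦ by
  have := (hσ.lt_iff_lt (show j < m by omega) hk).1 hjk
  have := (hσ.lt_iff_lt hk hj).1 hkj
  omega

lemma StrictMonoOn.notMem_Ioi_last (hσ : StrictMonoOn σ (Iio m)) {k : ℕ} (hk : k < m) :
    σ k ∉ Ioi (σ (m - 1)) := fun h ↦ by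
  have := (hσ.lt_iff_lt (show m - 1 < m by omega) hk).1 h
  omega

lemma mem_nonneg_set_iff_of_mem_gap (hm : 1 ≤ m) {c : ℕ → ℝ} (hc : ∀ j < m, 0 < c j) {F : ℝ → ℝ}
    (hF : ∀ x, F x = 1 + ∑ j ∈ Finset.range m, c j / (σ j - x)) {I : Set ℝ} [I.OrdConnected]
    (hI : I ⊆ Ioi 0) (hσI : ∀ j < m, σ j ∉ I) {μ x : ℝ} (hμ : μ ∈ I) (hFμ : F μ = 0) (hx : x ∈ I) :
    ((∀ j < m, x ≠ σ j) ∧ 0 ≤ x * F x) ↔ μ ≤ x := by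
  have hFI : StrictMonoOn F I := by
    have hsum := strictMonoOn_sum_div_sub (Finset.nonempty_range_iff.2 (by omega))
      (fun j hj ↦ hc j (Finset.mem_range.1 hj)) ‹I.OrdConnected›
      (fun j hj ↦ hσI j (Finset.mem_range.1 hj))
    intro a ha b hb hab
    simpa only [hF, add_lt_add_iff_left] using hsum ha hb hab
  rw [nonneg_mul_iff_le_of_strictMonoOn hFI hI hμ hFμ hx]
  exact and_iff_right fun j hj hxj ↦ hσI j hj (hxj ▸ hx)

end Poles

theorem nonneg_set_of_lambda_F
    (m : ℕ) (hm : 1 ≤ m)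
    (σ ρ : ℕ → ℝ)
    (hσ0 : 0 < σ 0)
    (hσmono : ∀ j, j + 1 < m → σ j < σ (j + 1))
    (hρ : ∀ j, j < m → 0 < ρ j)
    (F : ℝ → ℝ)
    (hF : ∀ lam : ℝ, F lam = 1 + ∑ j ∈ Finset.range m, σ j * ρ j / (σ j - lam))
    (μ : ℕ → ℝ)
    (hμzero : ∀ j, j < m → F (μ j) = 0)
    (hμlow : ∀ j, j < m → σ j < μ j)
    (hμhigh : ∀ j, j + 1 < m → μ j < σ (j + 1)) :
    {lam : ℝ | (∀ j, j < m → lam ≠ σ j) ∧ 0 ≤ lam * F lam} =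
      Set.Ico 0 (σ 0) ∪
        (⋃ (j : ℕ) (_ : j + 1 < m), Set.Ico (μ j) (σ (j + 1))) ∪
        Set.Ici (μ (m - 1)) := by
  have hσ : StrictMonoOn σ (Iio m) :=
    strictMonoOn_of_lt_add_one ordConnected_Iio fun j _ _ hj ↦ hσmono j hj
  have hσpos : ∀ j < m, 0 < σ j := fun j hj ↦ hσ0.trans_le (hσ.apply_zero_le hj)
  have hc : ∀ j < m, 0 < σ j * ρ j := fun j hj ↦ mul_pos (hσpos j hj) (hρ j hj)
  have hlast : m - 1 < m := by omega
  have hFpos : ∀ x < σ 0, 0 < F x := fun x hx ↦ hF x ▸ one_add_sum_div_sub_pos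
    (fun j hj ↦ (hc j (Finset.mem_range.1 hj)).le)
    (fun j hj ↦ hx.trans_le (hσ.apply_zero_le (Finset.mem_range.1 hj)))
  have hinner : ∀ j, j + 1 < m → ∀ x ∈ Ioo (σ j) (σ (j + 1)),
      ((∀ k < m, x ≠ σ k) ∧ 0 ≤ x * F x) ↔ μ j ≤ x := fun j hj x hx ↦
    mem_nonneg_set_iff_of_mem_gap hm hc hF (fun y hy ↦ (hσpos j (by omega)).trans hy.1)
      (fun k hk ↦ hσ.notMem_Ioo_succ hj hk) ⟨hμlow j (by omega), hμhigh j hj⟩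
      (hμzero j (by omega)) hx
  have htop : ∀ x ∈ Ioi (σ (m - 1)), ((∀ k < m, x ≠ σ k) ∧ 0 ≤ x * F x) ↔ μ (m - 1) ≤ x :=
    fun x hx ↦ mem_nonneg_set_iff_of_mem_gap hm hc hF (I := Ioi _)
      (fun y hy ↦ (hσpos _ hlast).trans hy) (fun k hk ↦ hσ.notMem_Ioi_last hk)
      (hμlow _ hlast) (hμzero _ hlast) hx
  ext x
  constructor
  · intro hx
    rcases lt_or_exists_mem_Ioo_or_lt hm hx.1 with hlow | ⟨j, hj, hxj⟩ | hxtop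
    · exact Or.inl (Or.inl ⟨nonneg_of_mul_nonneg_left hx.2 (hFpos x hlow), hlow⟩)
    · exact Or.inl (Or.inr (mem_iUnion₂.2 ⟨j, hj, (hinner j hj x hxj).1 hx, hxj.2⟩))
    · exact Or.inr ((htop x hxtop).1 hx)
  · rintro ((⟨h0, hlow⟩ | hmid) | hxtop)
    · exact ⟨fun j hj ↦ (hlow.trans_le (hσ.apply_zero_le hj)).ne,
        mul_nonneg h0 (hFpos x hlow).le⟩
    · obtain ⟨j, hj, hμx, hxσ⟩ := mem_iUnion₂.1 hmid
      exact (hinner j hj x ⟨(hμlow j (by omega)).trans_le hμx, hxσ⟩).2 hμx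
    · exact (htop x ((hμlow _ hlast).trans_le hxtop)).2 hxtop
end

section
/- For every real number a ≥ 0, the set of complex numbers λ ∈ ℂ ∖ {σ₁, …, σ_m} satisfying λ𝓕(λ) = a has exactly m+1 elements, and every element of this set is a nonnegative real number. In particular, any complex λ ∉ {σ₁, …, σ_m} with λ𝓕(λ) real and nonnegative is itself a nonnegative real number. -/
/-!
Write `G(λ) = λ 𝓕(λ) = λ + ∑ σ_j ρ_j λ / (σ_j - λ)`. Since
`Im G(λ) = Im λ · (1 + ∑ σ_j² ρ_j / |σ_j - λ|²)`, the value `G(λ)` is real only for real `λ`,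
and for real `x < 0` every summand is negative, so `G(x) ≤ x < 0`.

On the real line `G` is strictly increasing on each of the `m + 1` gaps between consecutive
poles, and runs from `-∞` to `+∞` across each of them (near a pole because `σ_j ρ_j > 0`, at
`+∞` like `x`, on the leftmost gap because `G(x) ≤ x`). Label a real root by the number of
poles below it: two roots with the same label have no pole between them, so monotonicity makes
the labelling injective, and the intermediate value theorem on each gap makes it onto
`{0, …, m}`.
-/

open Finset Filter Topology

namespace Secular

noncomputable def F (m : ℕ) (σ ρ : ℕ → ℝ) (z : ℂ) : ℂ :=
  1 + ∑ j ∈ range m, ((σ j * ρ j : ℝ) : ℂ) / ((σ j : ℂ) - z)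

/-- `x 𝓕(x)` for real `x` off the poles `σ j` (at a pole, `x / 0 = 0` gives a junk value). -/
noncomputable def g (m : ℕ) (σ ρ : ℕ → ℝ) (x : ℝ) : ℝ :=
  x + ∑ j ∈ range m, σ j * ρ j * (x / (σ j - x))

noncomputable def poleCount (m : ℕ) (σ : ℕ → ℝ) (x : ℝ) : ℕ :=
  #{j ∈ range m | σ j < x}

def gap (m : ℕ) (σ : ℕ → ℝ) (k : ℕ) : Set ℝ :=
  {x | ∀ j < m, (j < k → σ j < x) ∧ (k ≤ j → x < σ j)}

variable {m : ℕ} {σ ρ : ℕ → ℝ}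

theorem mul_F (z : ℂ) :
    z * F m σ ρ z = z + ∑ j ∈ range m, ((σ j * ρ j : ℝ) : ℂ) * (z / ((σ j : ℂ) - z)) := by
  simp only [F, mul_add, mul_one, mul_sum, mul_div_assoc']
  congr 1
  exact sum_congr rfl fun j _ => by ring

theorem ofReal_mul_F (x : ℝ) : (x : ℂ) * F m σ ρ x = g m σ ρ x := by
  rw [mul_F, g]
  push_cast
  rfl

theorem im_div_ofReal_sub (c : ℝ) (z : ℂ) :
    (z / (c - z)).im = c * z.im / Complex.normSq (c - z) := by
  simp only [Complex.div_im, Complex.sub_re, Complex.sub_im, Complex.ofReal_re,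
    Complex.ofReal_im]
  ring

theorem im_mul_F (z : ℂ) :
    (z * F m σ ρ z).im =
      z.im * (1 + ∑ j ∈ range m, σ j ^ 2 * ρ j / Complex.normSq (σ j - z)) := by
  rw [mul_F, Complex.add_im, Complex.im_sum, mul_add, mul_one, mul_sum]
  congr 1
  refine sum_congr rfl fun j _ => ?_
  rw [Complex.im_ofReal_mul, im_div_ofReal_sub]
  ring

theorem im_eq_zero_of_mul_F_eq_ofReal (hρ : ∀ j < m, 0 ≤ ρ j) {z : ℂ} {a : ℝ}
    (h : z * F m σ ρ z = a) : z.im = 0 := by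
  have hsum : 0 ≤ ∑ j ∈ range m, σ j ^ 2 * ρ j / Complex.normSq (σ j - z) :=
    sum_nonneg fun j hj =>
      div_nonneg (mul_nonneg (sq_nonneg _) (hρ j (mem_range.1 hj))) (Complex.normSq_nonneg _)
  have him := congrArg Complex.im h
  rw [im_mul_F, Complex.ofReal_im] at him
  exact (mul_eq_zero.1 him).resolve_right (by positivity)

theorem setOf_mul_F_eq_ofReal (hρ : ∀ j < m, 0 ≤ ρ j) (a : ℝ) :
    {z : ℂ | (∀ j < m, z ≠ σ j) ∧ z * F m σ ρ z = a} =
      (↑) '' {x : ℝ | (∀ j < m, x ≠ σ j) ∧ g m σ ρ x = a} := by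
  ext z
  constructor
  · rintro ⟨hz, h⟩
    obtain ⟨x, rfl⟩ : ∃ x : ℝ, (x : ℂ) = z :=
      ⟨z.re, Complex.ext rfl (im_eq_zero_of_mul_F_eq_ofReal hρ h).symm⟩
    refine ⟨x, ⟨fun j hj hx => hz j hj (congrArg _ hx), ?_⟩, rfl⟩
    exact_mod_cast (ofReal_mul_F x).symm.trans h
  · rintro ⟨x, ⟨hx, h⟩, rfl⟩
    refine ⟨fun j hj hxj => hx j hj (Complex.ofReal_injective hxj), ?_⟩
    rw [ofReal_mul_F, h]

theorem g_le_self (hσ : ∀ j < m, 0 ≤ σ j) (hρ : ∀ j < m, 0 ≤ ρ j) {x : ℝ} (hx : x ≤ 0) :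
    g m σ ρ x ≤ x := by
  refine add_le_of_nonpos_right (sum_nonpos fun j hj => ?_)
  have hj := mem_range.1 hj
  exact mul_nonpos_of_nonneg_of_nonpos (mul_nonneg (hσ j hj) (hρ j hj))
    (div_nonpos_of_nonpos_of_nonneg hx (by linarith [hσ j hj]))

theorem nonneg_of_g_nonneg (hσ : ∀ j < m, 0 ≤ σ j) (hρ : ∀ j < m, 0 ≤ ρ j) {x : ℝ}
    (h : 0 ≤ g m σ ρ x) : 0 ≤ x := by
  by_contra! hx
  linarith [g_le_self hσ hρ hx.le]

/-- Each summand increases by `σ j ^ 2 * ρ j * (y - x) / ((σ j - x) * (σ j - y))`. -/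
theorem g_lt_g (hρ : ∀ j < m, 0 ≤ ρ j) {x y : ℝ} (hxy : x < y)
    (h : ∀ j < m, 0 < (σ j - x) * (σ j - y)) : g m σ ρ x < g m σ ρ y := by
  refine add_lt_add_of_lt_of_le hxy (sum_le_sum fun j hj => ?_)
  have hj := mem_range.1 hj
  have hx : σ j - x ≠ 0 := left_ne_zero_of_mul (h j hj).ne'
  have hy : σ j - y ≠ 0 := right_ne_zero_of_mul (h j hj).ne'
  have hdiff : σ j * ρ j * (y / (σ j - y)) - σ j * ρ j * (x / (σ j - x)) =
      σ j ^ 2 * ρ j * (y - x) / ((σ j - x) * (σ j - y)) := by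
    field_simp
    ring
  have : 0 ≤ σ j ^ 2 * ρ j * (y - x) / ((σ j - x) * (σ j - y)) :=
    div_nonneg (mul_nonneg (mul_nonneg (sq_nonneg _) (hρ j hj)) (sub_nonneg.2 hxy.le))
      (h j hj).le
  linarith

/-- Two points with the same number of poles below them have no pole in between. -/
theorem g_lt_g_of_poleCount_eq (hρ : ∀ j < m, 0 ≤ ρ j) {x y : ℝ} (hxy : x < y)
    (hx : ∀ j < m, x ≠ σ j) (hy : ∀ j < m, y ≠ σ j) (h : poleCount m σ x = poleCount m σ y) :
    g m σ ρ x < g m σ ρ y := by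
  have hsub : {j ∈ range m | σ j < x} ⊆ {j ∈ range m | σ j < y} := fun j => by
    simp only [mem_filter]
    exact And.imp_right fun h => h.trans hxy
  have heq := eq_of_subset_of_card_le hsub h.ge
  refine g_lt_g hρ hxy fun j hj => ?_
  rcases (hx j hj).lt_or_gt with hxj | hxj
  · have hyj : ¬σ j < y := fun hjy => by
      have : j ∈ {j ∈ range m | σ j < y} := mem_filter.2 ⟨mem_range.2 hj, hjy⟩
      rw [← heq] at this
      exact hxj.not_gt (mem_filter.1 this).2
    exact mul_pos (sub_pos.2 hxj) (sub_pos.2 ((not_lt.1 hyj).lt_of_ne' (hy j hj).symm))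
  · exact mul_pos_of_neg_of_neg (sub_neg.2 hxj) (sub_neg.2 (hxj.trans hxy))

theorem injOn_poleCount (hρ : ∀ j < m, 0 ≤ ρ j) (a : ℝ) :
    Set.InjOn (poleCount m σ) {x | (∀ j < m, x ≠ σ j) ∧ g m σ ρ x = a} := by
  intro x ⟨hx, hxa⟩ y ⟨hy, hya⟩ h
  by_contra hne
  rcases lt_or_gt_of_ne hne with hxy | hxy
  · exact (g_lt_g_of_poleCount_eq hρ hxy hx hy h).ne (hxa.trans hya.symm)
  · exact (g_lt_g_of_poleCount_eq hρ hxy hy hx h.symm).ne (hya.trans hxa.symm)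

theorem continuousOn_g {s : Set ℝ} (hs : ∀ x ∈ s, ∀ j < m, x ≠ σ j) :
    ContinuousOn (g m σ ρ) s := by
  refine continuousOn_id.add (continuousOn_finsetSum _ fun j hj => ?_)
  exact continuousOn_const.mul (continuousOn_id.div (continuousOn_const.sub continuousOn_id)
    fun x hx => sub_ne_zero.2 (hs x hx j (mem_range.1 hj)).symm)

theorem tendsto_div_const_sub_atTop (c : ℝ) :
    Tendsto (fun x : ℝ => x / (c - x)) atTop (𝓝 (-1)) := by
  have h : Tendsto (fun x : ℝ => c / (c - x) - 1) atTop (𝓝 (0 - 1)) :=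
    (tendsto_const_nhds.div_atBot
      (tendsto_atBot_add_const_left _ c tendsto_neg_atTop_atBot)).sub_const 1
  rw [zero_sub] at h
  refine h.congr' ((eventually_gt_atTop c).mono fun x hx => ?_)
  rw [div_sub_one (sub_ne_zero.2 hx.ne), sub_sub_cancel]

theorem tendsto_div_sub_nhdsLT {c : ℝ} (hc : 0 < c) :
    Tendsto (fun x : ℝ => x / (c - x)) (𝓝[<] c) atTop := by
  have hsub : Tendsto (fun x : ℝ => c - x) (𝓝[<] c) (𝓝[>] 0) :=
    tendsto_nhdsWithin_iff.2
      ⟨((continuous_const.sub continuous_id).tendsto' c 0 (sub_self c)).mono_left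
        nhdsWithin_le_nhds,
      eventually_nhdsWithin_of_forall fun x hx => Set.mem_Ioi.2 (sub_pos.2 hx)⟩
  exact (tendsto_nhdsWithin_of_tendsto_nhds tendsto_id).pos_mul_atTop hc
    hsub.inv_tendsto_nhdsGT_zero

theorem tendsto_div_sub_nhdsGT {c : ℝ} (hc : 0 < c) :
    Tendsto (fun x : ℝ => x / (c - x)) (𝓝[>] c) atBot := by
  have hsub : Tendsto (fun x : ℝ => c - x) (𝓝[>] c) (𝓝[<] 0) :=
    tendsto_nhdsWithin_iff.2
      ⟨((continuous_const.sub continuous_id).tendsto' c 0 (sub_self c)).mono_left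
        nhdsWithin_le_nhds,
      eventually_nhdsWithin_of_forall fun x hx => Set.mem_Iio.2 (sub_neg.2 hx)⟩
  exact (tendsto_nhdsWithin_of_tendsto_nhds tendsto_id).pos_mul_atBot hc
    hsub.inv_tendsto_nhdsLT_zero

theorem tendsto_g_atTop : Tendsto (g m σ ρ) atTop atTop :=
  tendsto_id.atTop_add (tendsto_finsetSum _ fun j _ =>
    tendsto_const_nhds.mul (tendsto_div_const_sub_atTop (σ j)))

theorem continuousAt_g_sub_pole {k : ℕ} (hk : k < m) (hσ : Set.InjOn σ (Set.Iio m)) :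
    ContinuousAt (fun x => g m σ ρ x - σ k * ρ k * (x / (σ k - x))) (σ k) := by
  have hg : ∀ x, g m σ ρ x - σ k * ρ k * (x / (σ k - x)) =
      x + ∑ j ∈ (range m).erase k, σ j * ρ j * (x / (σ j - x)) := fun x => by
    rw [g, ← sum_erase_add _ _ (mem_range.2 hk)]
    ring
  simp only [hg]
  refine continuousAt_id.add (tendsto_finsetSum _ fun j hj => ?_)
  obtain ⟨hjk, hj⟩ := mem_erase.1 hj
  exact continuousAt_const.mul (continuousAt_id.div (continuousAt_const.sub continuousAt_id)
    (sub_ne_zero.2 (hσ.ne (mem_range.1 hj) hk hjk)))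

theorem tendsto_g_nhdsLT {k : ℕ} (hk : k < m) (hσ : Set.InjOn σ (Set.Iio m))
    (hσk : 0 < σ k) (hρk : 0 < ρ k) : Tendsto (g m σ ρ) (𝓝[<] σ k) atTop := by
  have hrest := (continuousAt_g_sub_pole (ρ := ρ) hk hσ).tendsto.mono_left
    (nhdsWithin_le_nhds (s := Set.Iio (σ k)))
  simpa only [sub_add_cancel] using
    hrest.add_atTop ((tendsto_div_sub_nhdsLT hσk).const_mul_atTop (mul_pos hσk hρk))

theorem tendsto_g_nhdsGT {k : ℕ} (hk : k < m) (hσ : Set.InjOn σ (Set.Iio m))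
    (hσk : 0 < σ k) (hρk : 0 < ρ k) : Tendsto (g m σ ρ) (𝓝[>] σ k) atBot := by
  have hrest := (continuousAt_g_sub_pole (ρ := ρ) hk hσ).tendsto.mono_left
    (nhdsWithin_le_nhds (s := Set.Ioi (σ k)))
  simpa only [sub_add_cancel] using
    hrest.add_atBot ((tendsto_div_sub_nhdsGT hσk).const_mul_atBot (mul_pos hσk hρk))

theorem ordConnected_gap (k : ℕ) : (gap m σ k).OrdConnected :=
  ⟨fun _ hx _ hy _ hz j hj =>
    ⟨fun h => ((hx j hj).1 h).trans_le hz.1, fun h => hz.2.trans_lt ((hy j hj).2 h)⟩⟩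

theorem ne_of_mem_gap {k : ℕ} {x : ℝ} (hx : x ∈ gap m σ k) : ∀ j < m, x ≠ σ j := by
  intro j hj
  rcases lt_or_ge j k with h | h
  · exact ((hx j hj).1 h).ne'
  · exact ((hx j hj).2 h).ne

theorem poleCount_of_mem_gap {k : ℕ} (hk : k ≤ m) {x : ℝ} (hx : x ∈ gap m σ k) :
    poleCount m σ x = k := by
  rw [poleCount, ← card_range k]
  congr 1
  ext j
  simp only [mem_filter, mem_range]
  refine ⟨fun ⟨hj, hjx⟩ => ?_, fun hj => ⟨by omega, (hx j (by omega)).1 hj⟩⟩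
  by_contra! h
  exact ((hx j hj).2 h).not_gt hjx

theorem eventually_nhdsLT_mem_gap (hσ : StrictMonoOn σ (Set.Iio m)) {k : ℕ} (hk : k < m) :
    ∀ᶠ x in 𝓝[<] σ k, x ∈ gap m σ k := by
  refine (eventually_all_finite (Set.finite_Iio m)).2 fun j hj => ?_
  rcases lt_or_ge j k with hjk | hjk
  · filter_upwards [nhdsWithin_le_nhds (lt_mem_nhds (hσ hj hk hjk))] with x hx
    exact ⟨fun _ => hx, fun h => absurd hjk h.not_gt⟩
  · filter_upwards [self_mem_nhdsWithin] with x (hx : x < σ k)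
    exact ⟨fun h => absurd h hjk.not_gt, fun _ => hx.trans_le (hσ.monotoneOn hk hj hjk)⟩

theorem eventually_nhdsGT_mem_gap (hσ : StrictMonoOn σ (Set.Iio m)) {k : ℕ} (hk : k < m) :
    ∀ᶠ x in 𝓝[>] σ k, x ∈ gap m σ (k + 1) := by
  refine (eventually_all_finite (Set.finite_Iio m)).2 fun j hj => ?_
  rcases lt_or_ge k j with hkj | hkj
  · filter_upwards [nhdsWithin_le_nhds (gt_mem_nhds (hσ hk hj hkj))] with x hx
    exact ⟨fun h => absurd hkj (by omega), fun _ => hx⟩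
  · filter_upwards [self_mem_nhdsWithin] with x (hx : σ k < x)
    exact ⟨fun _ => (hσ.monotoneOn hj hk hkj).trans_lt hx, fun h => absurd hkj (by omega)⟩

theorem eventually_atTop_mem_gap : ∀ᶠ x in atTop, x ∈ gap m σ m :=
  (eventually_all_finite (Set.finite_Iio m)).2 fun j hj =>
    (eventually_gt_atTop (σ j)).mono fun _ hx => ⟨fun _ => hx, fun h => absurd hj h.not_gt⟩

theorem exists_mem_gap_g_le (hσ : StrictMonoOn σ (Set.Iio m)) (hσpos : ∀ j < m, 0 < σ j)
    (hρ : ∀ j < m, 0 < ρ j) {k : ℕ} (hk : k ≤ m) (a : ℝ) :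
    ∃ x ∈ gap m σ k, g m σ ρ x ≤ a := by
  cases k with
  | zero =>
    have hx : min a 0 - 1 < 0 := by linarith [min_le_right a 0]
    refine ⟨min a 0 - 1, fun j hj => ⟨fun h => absurd h j.not_lt_zero,
      fun _ => hx.trans (hσpos j hj)⟩, ?_⟩
    linarith [min_le_left a 0,
      g_le_self (ρ := ρ) (fun j hj => (hσpos j hj).le) (fun j hj => (hρ j hj).le) hx.le]
  | succ i =>
    have hi : i < m := hk
    exact ((eventually_nhdsGT_mem_gap hσ hi).and
      ((tendsto_g_nhdsGT hi hσ.injOn (hσpos i hi) (hρ i hi)).eventually_le_atBot a)).exists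

theorem exists_mem_gap_le_g (hσ : StrictMonoOn σ (Set.Iio m)) (hσpos : ∀ j < m, 0 < σ j)
    (hρ : ∀ j < m, 0 < ρ j) {k : ℕ} (hk : k ≤ m) (a : ℝ) :
    ∃ x ∈ gap m σ k, a ≤ g m σ ρ x := by
  rcases hk.lt_or_eq with hk | rfl
  · exact ((eventually_nhdsLT_mem_gap hσ hk).and
      ((tendsto_g_nhdsLT hk hσ.injOn (hσpos k hk) (hρ k hk)).eventually_ge_atTop a)).exists
  · exact (eventually_atTop_mem_gap.and (tendsto_g_atTop.eventually_ge_atTop a)).exists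

theorem exists_mem_gap_g_eq (hσ : StrictMonoOn σ (Set.Iio m)) (hσpos : ∀ j < m, 0 < σ j)
    (hρ : ∀ j < m, 0 < ρ j) {k : ℕ} (hk : k ≤ m) (a : ℝ) :
    ∃ x ∈ gap m σ k, g m σ ρ x = a := by
  obtain ⟨x, hx, hxa⟩ := exists_mem_gap_g_le hσ hσpos hρ hk a
  obtain ⟨y, hy, hya⟩ := exists_mem_gap_le_g hσ hσpos hρ hk a
  exact (ordConnected_gap k).isPreconnected.intermediate_value hx hy
    (continuousOn_g fun _ hz => ne_of_mem_gap hz) ⟨hxa, hya⟩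

theorem image_poleCount_setOf_g_eq (hσ : StrictMonoOn σ (Set.Iio m))
    (hσpos : ∀ j < m, 0 < σ j) (hρ : ∀ j < m, 0 < ρ j) (a : ℝ) :
    poleCount m σ '' {x | (∀ j < m, x ≠ σ j) ∧ g m σ ρ x = a} = ↑(range (m + 1)) := by
  ext k
  simp only [Set.mem_image, coe_range, Set.mem_Iio, Nat.lt_succ_iff]
  constructor
  · rintro ⟨x, -, rfl⟩
    exact (card_filter_le _ _).trans (card_range m).le
  · intro hk
    obtain ⟨x, hx, hgx⟩ := exists_mem_gap_g_eq hσ hσpos hρ hk a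
    exact ⟨x, ⟨ne_of_mem_gap hx, hgx⟩, poleCount_of_mem_gap hk hx⟩

theorem ncard_setOf_g_eq (hσ : StrictMonoOn σ (Set.Iio m)) (hσpos : ∀ j < m, 0 < σ j)
    (hρ : ∀ j < m, 0 < ρ j) (a : ℝ) :
    {x | (∀ j < m, x ≠ σ j) ∧ g m σ ρ x = a}.ncard = m + 1 := by
  rw [← (injOn_poleCount (fun j hj => (hρ j hj).le) a).ncard_image,
    image_poleCount_setOf_g_eq hσ hσpos hρ, Set.ncard_coe_finset, card_range]

end Secular

theorem complex_roots_are_nonneg_real_general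
    (m : ℕ)
    (σ ρ : ℕ → ℝ)
    (hσ0 : 0 < σ 0)
    (hσmono : ∀ j, j + 1 < m → σ j < σ (j + 1))
    (hρ : ∀ j, j < m → 0 < ρ j)
    (F : ℂ → ℂ)
    (hF : ∀ lam : ℂ, F lam =
      1 + ∑ j ∈ Finset.range m, ((σ j * ρ j : ℝ) : ℂ) / (((σ j : ℝ) : ℂ) - lam)) :
    (∀ a : ℝ, 0 ≤ a →
      {lam : ℂ | (∀ j, j < m → lam ≠ ((σ j : ℝ) : ℂ)) ∧ lam * F lam = (a : ℂ)}.ncard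
          = m + 1 ∧
      ∀ lam ∈ {lam : ℂ | (∀ j, j < m → lam ≠ ((σ j : ℝ) : ℂ)) ∧ lam * F lam = (a : ℂ)},
        ∃ r : ℝ, 0 ≤ r ∧ lam = (r : ℂ)) ∧
    (∀ lam : ℂ, (∀ j, j < m → lam ≠ ((σ j : ℝ) : ℂ)) →
      (∃ c : ℝ, 0 ≤ c ∧ lam * F lam = (c : ℂ)) →
      ∃ r : ℝ, 0 ≤ r ∧ lam = (r : ℂ)) := by
  obtain rfl : F = Secular.F m σ ρ := funext hF
  have hσ : StrictMonoOn σ (Set.Iio m) :=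
    strictMonoOn_of_lt_add_one Set.ordConnected_Iio fun j _ _ hj => hσmono j hj
  have hσpos : ∀ j < m, 0 < σ j := fun j hj =>
    hσ0.trans_le (hσ.monotoneOn (lt_of_le_of_lt j.zero_le hj) hj j.zero_le)
  have hρ' : ∀ j < m, 0 ≤ ρ j := fun j hj => (hρ j hj).le
  have hnonneg : ∀ a : ℝ, 0 ≤ a →
      ∀ lam ∈ {lam : ℂ | (∀ j < m, lam ≠ σ j) ∧ lam * Secular.F m σ ρ lam = a},
        ∃ r : ℝ, 0 ≤ r ∧ lam = r := by
    intro a ha lam hlam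
    rw [Secular.setOf_mul_F_eq_ofReal hρ'] at hlam
    obtain ⟨x, ⟨-, hx⟩, rfl⟩ := hlam
    exact ⟨x, Secular.nonneg_of_g_nonneg (fun j hj => (hσpos j hj).le) hρ' (hx ▸ ha), rfl⟩
  refine ⟨fun a ha => ⟨?_, hnonneg a ha⟩, fun lam hlam ⟨c, hc, h⟩ => hnonneg c hc lam ⟨hlam, h⟩⟩
  rw [Secular.setOf_mul_F_eq_ofReal hρ', Set.ncard_image_of_injective _ Complex.ofReal_injective,
    Secular.ncard_setOf_g_eq hσ hσpos hρ]

theorem complex_roots_are_nonneg_real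
    (m : ℕ) (hm : 1 ≤ m)
    (σ ρ : ℕ → ℝ)
    (hσ0 : 0 < σ 0)
    (hσmono : ∀ j, j + 1 < m → σ j < σ (j + 1))
    (hρ : ∀ j, j < m → 0 < ρ j)
    (F : ℂ → ℂ)
    (hF : ∀ lam : ℂ, F lam =
      1 + ∑ j ∈ Finset.range m, ((σ j * ρ j : ℝ) : ℂ) / (((σ j : ℝ) : ℂ) - lam)) :
    (∀ a : ℝ, 0 ≤ a →
      {lam : ℂ | (∀ j, j < m → lam ≠ ((σ j : ℝ) : ℂ)) ∧ lam * F lam = (a : ℂ)}.ncard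
          = m + 1 ∧
      ∀ lam ∈ {lam : ℂ | (∀ j, j < m → lam ≠ ((σ j : ℝ) : ℂ)) ∧ lam * F lam = (a : ℂ)},
        ∃ r : ℝ, 0 ≤ r ∧ lam = (r : ℂ)) ∧
    (∀ lam : ℂ, (∀ j, j < m → lam ≠ ((σ j : ℝ) : ℂ)) →
      (∃ c : ℝ, 0 ≤ c ∧ lam * F lam = (c : ℂ)) →
      ∃ r : ℝ, 0 ≤ r ∧ lam = (r : ℂ)) :=
  complex_roots_are_nonneg_real_general m σ ρ hσ0 hσmono hρ F hF
end

section
/- Let θ ∈ ℂⁿ with |θ_α| = 1 for all α, and let θ⁽ᵏ⁾ ∈ ℂⁿ (k ∈ ℕ) with |θ_α⁽ᵏ⁾| = 1 for all α and θ⁽ᵏ⁾ → θ as k → ∞. Then for every smooth function w : ℝⁿ → ℂ that is θ-periodic on □ there exist smooth functions ŵ⁽ᵏ⁾ : ℝⁿ → ℂ such that w + ŵ⁽ᵏ⁾ is θ⁽ᵏ⁾-periodic on □ for every k, and sup_{x ∈ □} |ŵ⁽ᵏ⁾(x)| + sup_{x ∈ □} ‖∇ŵ⁽ᵏ⁾(x)‖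 → 0 as k → ∞. -/
/-!
STATEMENT 10 (Lemma 3.4): given θ-periodic smooth w on the unit cube □ = [0,1]ⁿ
and unit-modulus θ⁽ᵏ⁾ → θ, there are smooth corrections ŵ⁽ᵏ⁾ such that
w + ŵ⁽ᵏ⁾ is θ⁽ᵏ⁾-periodic and sup_□ |ŵ⁽ᵏ⁾| + sup_□ ‖∇ŵ⁽ᵏ⁾‖ → 0.
-/

open Filter

set_option maxHeartbeats 1000000 in

theorem theta_periodic_correction
    (n : ℕ) (hn : 1 ≤ n)
    (θ : Fin n → ℂ) (hθ : ∀ i, ‖θ i‖ = 1)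
    (θk : ℕ → Fin n → ℂ) (hθk : ∀ k i, ‖θk k i‖ = 1)
    (hconv : ∀ i, Tendsto (fun k => θk k i) atTop (nhds (θ i)))
    (w : (Fin n → ℝ) → ℂ) (hw : ContDiff ℝ (⊤ : ℕ∞) w)
    (hwper : ∀ i : Fin n, ∀ x ∈ Set.Icc (0 : Fin n → ℝ) 1, x i = 0 →
      w (x + Pi.single i 1) = (starRingEnd ℂ) (θ i) * w x) :
    ∃ what : ℕ → (Fin n → ℝ) → ℂ,
      (∀ k, ContDiff ℝ (⊤ : ℕ∞) (what k)) ∧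
      (∀ k, ∀ i : Fin n, ∀ x ∈ Set.Icc (0 : Fin n → ℝ) 1, x i = 0 →
        (w + what k) (x + Pi.single i 1) = (starRingEnd ℂ) (θk k i) * (w + what k) x) ∧
      (∀ δ : ℝ, 0 < δ → ∃ K : ℕ, ∀ k, K ≤ k →
        ∀ x ∈ Set.Icc (0 : Fin n → ℝ) 1,
          ‖what k x‖ + ‖fderiv ℝ (what k) x‖ < δ) := by
  classical
  -- a bound for w and its derivative on the cube
  obtain ⟨C, hC1, hCw, hCw'⟩ : ∃ C : ℝ, 1 ≤ C ∧
      (∀ x ∈ Set.Icc (0 : Fin n → ℝ) 1, ‖w x‖ ≤ C) ∧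
      (∀ x ∈ Set.Icc (0 : Fin n → ℝ) 1, ‖fderiv ℝ w x‖ ≤ C) := by
    have hcpt : IsCompact (Set.Icc (0 : Fin n → ℝ) 1) := isCompact_Icc
    obtain ⟨C1, hC1⟩ := hcpt.exists_bound_of_continuousOn hw.continuous.continuousOn
    obtain ⟨C2, hC2⟩ := hcpt.exists_bound_of_continuousOn
      ((hw.continuous_fderiv (by simp)).continuousOn)
    refine ⟨max 1 (max C1 C2), le_max_left _ _, fun x hx => ?_, fun x hx => ?_⟩
    · exact le_trans (hC1 x hx) (le_trans (le_max_left _ _) (le_max_right _ _))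
    · exact le_trans (hC2 x hx) (le_trans (le_max_right _ _) (le_max_right _ _))
  have hCpos : (0 : ℝ) < C := lt_of_lt_of_le one_pos hC1
  -- the multipliers
  set lam : ℕ → Fin n → ℂ := fun k i => (starRingEnd ℂ) (θk k i) * θ i with hlam
  have hlamne : ∀ k i, lam k i ≠ 0 := by
    intro k i
    simp only [hlam]
    apply mul_ne_zero
    · simpa using fun h => by simpa [h] using hθk k i
    · exact fun h => by simpa [h] using hθ i
  set μ : ℕ → Fin n → ℂ := fun k i => Complex.log (lam k i) with hμdef
  -- the linear forms
  set L : (Fin n → ℂ) → ((Fin n → ℝ) →L[ℝ] ℂ) := fun ν =>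
    ∑ i, ν i • (Complex.ofRealCLM.comp (ContinuousLinearMap.proj i)) with hLdef
  have hLapp : ∀ (ν : Fin n → ℂ) (x : Fin n → ℝ), L ν x = ∑ i, ν i * (x i : ℂ) := by
    intro ν x
    simp [hLdef, ContinuousLinearMap.sum_apply, smul_eq_mul]
  -- bound of L ν x on the cube
  have hLbound : ∀ (ν : Fin n → ℂ) (x : Fin n → ℝ), x ∈ Set.Icc (0 : Fin n → ℝ) 1 →
      ‖L ν x‖ ≤ ∑ i, ‖ν i‖ := by
    intro ν x hx
    rw [hLapp]
    refine le_trans (norm_sum_le _ _) (Finset.sum_le_sum fun i _ => ?_)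
    rw [norm_mul]
    have hx0 := hx.1 i
    have hx1 := hx.2 i
    simp only [Pi.zero_apply] at hx0
    simp only [Pi.one_apply] at hx1
    have : ‖(x i : ℂ)‖ ≤ 1 := by
      rw [Complex.norm_real, Real.norm_eq_abs, abs_of_nonneg hx0]; exact hx1
    calc ‖ν i‖ * ‖(x i : ℂ)‖ ≤ ‖ν i‖ * 1 :=
          mul_le_mul_of_nonneg_left this (norm_nonneg _)
      _ = ‖ν i‖ := mul_one _
  -- operator norm bound
  have hLnorm : ∀ ν : Fin n → ℂ, ‖L ν‖ ≤ ∑ i, ‖ν i‖ := by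
    intro ν
    refine ContinuousLinearMap.opNorm_le_bound _ (Finset.sum_nonneg fun i _ => norm_nonneg _)
      (fun x => ?_)
    rw [hLapp]
    calc ‖∑ i, ν i * (x i : ℂ)‖ ≤ ∑ i, ‖ν i * (x i : ℂ)‖ := norm_sum_le _ _
      _ ≤ ∑ i, ‖ν i‖ * ‖x‖ := by
          refine Finset.sum_le_sum fun i _ => ?_
          rw [norm_mul, Complex.norm_real]
          exact mul_le_mul_of_nonneg_left (norm_le_pi_norm x i) (norm_nonneg _)
      _ = (∑ i, ‖ν i‖) * ‖x‖ := (Finset.sum_mul _ _ _).symm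
  -- the corrections
  set what : ℕ → (Fin n → ℝ) → ℂ :=
    fun k x => (Complex.exp (L (μ k) x) - 1) * w x with hwhatdef
  -- smoothness
  have hsmooth : ∀ k, ContDiff ℝ (⊤ : ℕ∞) (what k) := by
    intro k
    have he : ContDiff ℝ (⊤ : ℕ∞) Complex.exp := Complex.contDiff_exp
    exact ((he.comp (L (μ k)).contDiff).sub contDiff_const).mul hw
  -- derivative of the exponential factor
  have hgderiv : ∀ (ν : Fin n → ℂ) (x : Fin n → ℝ),
      HasFDerivAt (fun y => Complex.exp (L ν y) - 1)
        (Complex.exp (L ν x) • L ν) x := by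
    intro ν x
    have h1 := ((Complex.hasDerivAt_exp (L ν x)).hasFDerivAt.restrictScalars ℝ).comp x
      (L ν).hasFDerivAt
    have h2 := h1.sub_const 1
    refine h2.congr_fderiv ?_
    ext y
    simp [mul_comm]
  -- pointwise bound on the cube
  have hbound : ∀ k, ∀ x ∈ Set.Icc (0 : Fin n → ℝ) 1, (∑ i, ‖μ k i‖) ≤ 1 →
      ‖what k x‖ + ‖fderiv ℝ (what k) x‖ ≤ 7 * C * (∑ i, ‖μ k i‖) := by
    intro k x hx hr1
    set r : ℝ := ∑ i, ‖μ k i‖ with hrdef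
    have hrnn : 0 ≤ r := Finset.sum_nonneg fun i _ => norm_nonneg _
    have hLx : ‖L (μ k) x‖ ≤ r := hLbound (μ k) x hx
    have hLx1 : ‖L (μ k) x‖ ≤ 1 := hLx.trans hr1
    have hexp1 : ‖Complex.exp (L (μ k) x) - 1‖ ≤ 2 * r := by
      have := Complex.norm_exp_sub_one_le (x := L (μ k) x) (by simpa using hLx1)
      calc ‖Complex.exp (L (μ k) x) - 1‖ ≤ 2 * ‖L (μ k) x‖ := by simpa using this
        _ ≤ 2 * r := by linarith
    have hexp3 : ‖Complex.exp (L (μ k) x)‖ ≤ 3 := by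
      rw [Complex.norm_exp]
      have hre : (L (μ k) x).re ≤ 1 := le_trans (Complex.re_le_norm _) hLx1
      calc Real.exp (L (μ k) x).re ≤ Real.exp 1 := Real.exp_le_exp.2 hre
        _ ≤ 3 := by
            have := Real.exp_one_lt_d9
            linarith
    -- first summand
    have h1 : ‖what k x‖ ≤ 2 * r * C := by
      rw [hwhatdef]
      simp only [norm_mul]
      calc ‖Complex.exp (L (μ k) x) - 1‖ * ‖w x‖ ≤ (2 * r) * C :=
            mul_le_mul hexp1 (hCw x hx) (norm_nonneg _) (by positivity)
        _ = 2 * r * C := rfl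
    -- derivative
    have hdiffg : DifferentiableAt ℝ (fun y => Complex.exp (L (μ k) y) - 1) x :=
      (hgderiv (μ k) x).differentiableAt
    have hdiffw : DifferentiableAt ℝ w x := (hw.differentiable (by simp)) x
    have hfder : fderiv ℝ (what k) x
        = (Complex.exp (L (μ k) x) - 1) • fderiv ℝ w x
          + w x • (Complex.exp (L (μ k) x) • L (μ k)) := by
      rw [hwhatdef]
      rw [fderiv_fun_mul hdiffg hdiffw, (hgderiv (μ k) x).fderiv]
    have h2 : ‖fderiv ℝ (what k) x‖ ≤ 2 * r * C + C * (3 * r) := by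
      rw [hfder]
      refine le_trans (norm_add_le _ _) (add_le_add ?_ ?_)
      · exact le_trans (ContinuousLinearMap.opNorm_smul_le _ _)
          (mul_le_mul hexp1 (hCw' x hx) (norm_nonneg _) (by positivity))
      · calc ‖w x • Complex.exp (L (μ k) x) • L (μ k)‖
            ≤ ‖w x‖ * (‖Complex.exp (L (μ k) x)‖ * ‖L (μ k)‖) :=
              le_trans (ContinuousLinearMap.opNorm_smul_le _ _)
                (mul_le_mul_of_nonneg_left (ContinuousLinearMap.opNorm_smul_le _ _)
                  (norm_nonneg _))
          _ ≤ C * (3 * r) := by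
              refine mul_le_mul (hCw x hx) ?_ (by positivity) (le_of_lt hCpos)
              exact mul_le_mul hexp3 (hLnorm (μ k)) (norm_nonneg _) (by norm_num)
    calc ‖what k x‖ + ‖fderiv ℝ (what k) x‖ ≤ 2 * r * C + (2 * r * C + C * (3 * r)) :=
          add_le_add h1 h2
      _ = 7 * C * r := by ring
  -- convergence of μ to 0
  have hμlim : ∀ i, Tendsto (fun k => μ k i) atTop (nhds 0) := by
    intro i
    have hlimlam : Tendsto (fun k => lam k i) atTop (nhds 1) := by
      have h1 : Tendsto (fun k => (starRingEnd ℂ) (θk k i)) atTop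
          (nhds ((starRingEnd ℂ) (θ i))) :=
        (Complex.continuous_conj.tendsto _).comp (hconv i)
      have h2 := h1.mul_const (θ i)
      have h3 : (starRingEnd ℂ) (θ i) * θ i = 1 := by
        rw [mul_comm, Complex.mul_conj]
        norm_cast
        rw [Complex.normSq_eq_norm_sq, hθ i]
        norm_num
      simpa [h3] using h2
    have hcont : ContinuousAt Complex.log 1 := continuousAt_clog Complex.one_mem_slitPlane
    have := hcont.tendsto.comp hlimlam
    simpa [Complex.log_one, hμdef, Function.comp_def] using this
  have hrlim : Tendsto (fun k => ∑ i, ‖μ k i‖) atTop (nhds 0) := by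
    have := tendsto_finset_sum (Finset.univ : Finset (Fin n))
      (fun i _ => (hμlim i).norm)
    simpa using this
  refine ⟨what, hsmooth, ?_, ?_⟩
  · -- periodicity
    intro k i x hx hxi
    have key : ∀ y, (w + what k) y = Complex.exp (L (μ k) y) * w y := by
      intro y
      simp only [Pi.add_apply, hwhatdef]
      ring
    rw [key, key]
    have hLadd : L (μ k) (x + Pi.single i 1) = L (μ k) x + μ k i := by
      rw [map_add]
      congr 1
      rw [hLapp]
      rw [Finset.sum_eq_single i]
      · simp
      · intro j _ hj
        simp [Pi.single_apply, hj]
      · simp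
    rw [hLadd, Complex.exp_add, Complex.exp_log (hlamne k i),
      hwper i x hx hxi]
    have h3 : θ i * (starRingEnd ℂ) (θ i) = 1 := by
      rw [Complex.mul_conj]
      norm_cast
      rw [Complex.normSq_eq_norm_sq, hθ i]
      norm_num
    simp only [hlam]
    linear_combination (Complex.exp (L (μ k) x) * (starRingEnd ℂ) (θk k i) * w x) * h3
  · -- smallness
    intro δ hδ
    have hε : 0 < min 1 (δ / (7 * C)) := by
      refine lt_min one_pos ?_
      positivity
    have := (Metric.tendsto_atTop.1 hrlim) (min 1 (δ / (7 * C))) hε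
    obtain ⟨K, hK⟩ := this
    refine ⟨K, fun k hk x hx => ?_⟩
    have hrk := hK k hk
    rw [Real.dist_eq, sub_zero] at hrk
    have hrnn : 0 ≤ ∑ i, ‖μ k i‖ := Finset.sum_nonneg fun i _ => norm_nonneg _
    rw [abs_of_nonneg hrnn] at hrk
    have hr1 : (∑ i, ‖μ k i‖) ≤ 1 := le_of_lt (lt_of_lt_of_le hrk (min_le_left _ _))
    have hrδ : (∑ i, ‖μ k i‖) < δ / (7 * C) := lt_of_lt_of_le hrk (min_le_right _ _)
    calc ‖what k x‖ + ‖fderiv ℝ (what k) x‖ ≤ 7 * C * (∑ i, ‖μ k i‖) :=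
          hbound k x hx hr1
      _ < 7 * C * (δ / (7 * C)) := by
          apply mul_lt_mul_of_pos_left hrδ
          positivity
      _ = δ := by field_simp
end

section
/- Let θ ∈ ℂⁿ with |θ_α| = 1 for all α. For every δ > 0 there exists η > 0 such that: for every θ′ ∈ ℂⁿ with |θ′_α| = 1 for all α and max_α |θ′_α − θ_α| < η, there exists a smooth function 𝟙 : ℝⁿ → ℂ satisfying 𝟙(x + e_α) = (conj(θ′_α)/conj(θ_α)) · 𝟙(x) for every α and every x ∈ M_α, and sup_{x ∈ □} |𝟙(x) − 1| + sup_{x ∈ □} ‖∇𝟙(x)‖ < δ. -/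
/-!
STATEMENT 11: for unit-modulus θ and every δ > 0 there is η > 0 such that for
any unit-modulus θ′ with max_α |θ′_α − θ_α| < η there exists a smooth function
𝟙 : ℝⁿ → ℂ with 𝟙(x + e_α) = (conj θ′_α / conj θ_α) · 𝟙(x) on the lower faces
of the cube and sup_□ |𝟙 − 1| + sup_□ ‖∇𝟙‖ < δ.
-/

theorem near_one_quasi_periodic_function
    (n : ℕ) (hn : 1 ≤ n)
    (θ : Fin n → ℂ) (hθ : ∀ i, ‖θ i‖ = 1) :
    ∀ δ : ℝ, 0 < δ → ∃ η : ℝ, 0 < η ∧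
      ∀ θ' : Fin n → ℂ, (∀ i, ‖θ' i‖ = 1) → (∀ i, ‖θ' i - θ i‖ < η) →
        ∃ one : (Fin n → ℝ) → ℂ,
          ContDiff ℝ (⊤ : ℕ∞) one ∧
          (∀ i : Fin n, ∀ x ∈ Set.Icc (0 : Fin n → ℝ) 1, x i = 0 →
            one (x + Pi.single i 1) =
              ((starRingEnd ℂ) (θ' i) / (starRingEnd ℂ) (θ i)) * one x) ∧
          (∀ x ∈ Set.Icc (0 : Fin n → ℝ) 1,
            ‖one x - 1‖ + ‖fderiv ℝ one x‖ < δ) := by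
  intro δ hδ
  have hn0 : (0:ℝ) < n := by exact_mod_cast hn
  set ε : ℝ := min (1 / n) (δ / (6 * n)) with hεdef
  have hεpos : 0 < ε := lt_min (by positivity) (by positivity)
  have hε1 : (n : ℝ) * ε ≤ 1 := by
    have : ε ≤ 1 / n := min_le_left _ _
    calc (n : ℝ) * ε ≤ n * (1 / n) := by nlinarith
      _ = 1 := by field_simp
  have hεδ : (n : ℝ) * ε ≤ δ / 6 := by
    have : ε ≤ δ / (6 * n) := min_le_right _ _
    calc (n : ℝ) * ε ≤ n * (δ / (6 * n)) := by nlinarith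
      _ = δ / 6 := by field_simp
  obtain ⟨η, hηpos, hηlog⟩ :=
    Metric.continuousAt_iff.mp (continuousAt_clog (x := (1:ℂ)) Complex.one_mem_slitPlane) ε hεpos
  refine ⟨η, hηpos, ?_⟩
  intro θ' hθ' hclose
  set c : Fin n → ℂ := fun i => (starRingEnd ℂ) (θ' i) / (starRingEnd ℂ) (θ i) with hc
  have hθne : ∀ i, (starRingEnd ℂ) (θ i) ≠ 0 := by
    intro i
    apply (map_ne_zero (starRingEnd ℂ)).mpr
    intro h
    have h2 := hθ i
    rw [h] at h2
    simp at h2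
  have hcne : ∀ i, c i ≠ 0 := by
    intro i
    have h1 : (starRingEnd ℂ) (θ' i) ≠ 0 := by
      apply (map_ne_zero (starRingEnd ℂ)).mpr
      intro h
      have h2 := hθ' i
      rw [h] at h2
      simp at h2
    exact div_ne_zero h1 (hθne i)
  have hc1 : ∀ i, ‖c i - 1‖ < η := by
    intro i
    have : c i - 1 = ((starRingEnd ℂ) (θ' i) - (starRingEnd ℂ) (θ i)) / (starRingEnd ℂ) (θ i) := div_sub_one (hθne i)
    have hd : ‖(starRingEnd ℂ) (θ i)‖ = 1 := by rw [RCLike.norm_conj]; exact hθ i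
    rw [this, norm_div, ← map_sub, RCLike.norm_conj, hd, div_one]
    exact hclose i
  set L : Fin n → ℂ := fun i => Complex.log (c i) with hL
  have hLnorm : ∀ i, ‖L i‖ ≤ ε := by
    intro i
    have h := hηlog (show dist (c i) 1 < η by rw [dist_eq_norm]; exact hc1 i)
    rw [Complex.log_one, dist_zero_right] at h
    exact h.le
  set T : (Fin n → ℝ) →L[ℝ] ℂ :=
    ∑ i, (ContinuousLinearMap.proj i : (Fin n → ℝ) →L[ℝ] ℝ).smulRight (L i) with hT
  have hTx : ∀ x : Fin n → ℝ, T x = ∑ i, x i • L i := by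
    intro x
    simp [hT, ContinuousLinearMap.sum_apply]
  have hTnorm : ‖T‖ ≤ n * ε := by
    apply ContinuousLinearMap.opNorm_le_bound _ (by positivity)
    intro x
    rw [hTx]
    calc ‖∑ i, x i • L i‖ ≤ ∑ i, ‖x i • L i‖ := norm_sum_le _ _
      _ ≤ ∑ i : Fin n, ‖x‖ * ε := by
          apply Finset.sum_le_sum
          intro i _
          rw [norm_smul, Real.norm_eq_abs]
          have hxi : |x i| ≤ ‖x‖ := by simpa using norm_le_pi_norm x i
          exact mul_le_mul hxi (hLnorm i) (norm_nonneg _) (norm_nonneg _)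
      _ = n * ε * ‖x‖ := by simp [Finset.sum_const]; ring
  have hTbound : ∀ x ∈ Set.Icc (0 : Fin n → ℝ) 1, ‖T x‖ ≤ n * ε := by
    intro x hx
    rw [hTx]
    calc ‖∑ i, x i • L i‖ ≤ ∑ i, ‖x i • L i‖ := norm_sum_le _ _
      _ ≤ ∑ i : Fin n, ε := by
          apply Finset.sum_le_sum
          intro i _
          rw [norm_smul, Real.norm_eq_abs, abs_of_nonneg (hx.1 i)]
          calc x i * ‖L i‖ ≤ 1 * ε := mul_le_mul (hx.2 i) (hLnorm i) (norm_nonneg _) one_pos.le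
            _ = ε := one_mul ε
      _ = n * ε := by simp [Finset.sum_const]
  refine ⟨fun x => Complex.exp (T x), ?_, ?_, ?_⟩
  · exact Complex.contDiff_exp.comp T.contDiff
  · intro i x _ _
    have : T (x + Pi.single i 1) = T x + L i := by
      rw [map_add, hTx (Pi.single i 1)]
      congr 1
      rw [Finset.sum_eq_single i]
      · simp
      · intro j _ hj; simp [Pi.single_apply, hj]
      · simp
    show Complex.exp (T (x + Pi.single i 1)) = _
    rw [this, Complex.exp_add, Complex.exp_log (hcne i), mul_comm]
  · intro x hx
    have hderiv : HasFDerivAt (fun x => Complex.exp (T x))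
        ((((1 : ℂ →L[ℂ] ℂ).smulRight (Complex.exp (T x))).restrictScalars ℝ).comp T) x :=
      ((Complex.hasDerivAt_exp (T x)).hasFDerivAt.restrictScalars ℝ).comp x T.hasFDerivAt
    rw [hderiv.fderiv]
    have hTxle : ‖T x‖ ≤ 1 := (hTbound x hx).trans hε1
    have h1 : ‖Complex.exp (T x) - 1‖ ≤ 2 * (n * ε) := by
      have := Complex.norm_exp_sub_one_le (x := T x) (by simpa [Complex.norm_def] using hTxle)
      calc ‖Complex.exp (T x) - 1‖ ≤ 2 * ‖T x‖ := by simpa using this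
        _ ≤ 2 * (n * ε) := by linarith [hTbound x hx]
    have h2 : ‖(((1 : ℂ →L[ℂ] ℂ).smulRight (Complex.exp (T x))).restrictScalars ℝ).comp T‖
        ≤ 3 * (n * ε) := by
      calc ‖(((1 : ℂ →L[ℂ] ℂ).smulRight (Complex.exp (T x))).restrictScalars ℝ).comp T‖
          ≤ ‖((1 : ℂ →L[ℂ] ℂ).smulRight (Complex.exp (T x))).restrictScalars ℝ‖ * ‖T‖ :=
            ContinuousLinearMap.opNorm_comp_le _ _
        _ = ‖(1 : ℂ →L[ℂ] ℂ).smulRight (Complex.exp (T x))‖ * ‖T‖ := by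
            rw [ContinuousLinearMap.norm_restrictScalars]
        _ = ‖Complex.exp (T x)‖ * ‖T‖ := by
            rw [ContinuousLinearMap.norm_smulRight_apply, ContinuousLinearMap.one_def,
              ContinuousLinearMap.norm_id, one_mul]
        _ ≤ 3 * (n * ε) := by
            apply mul_le_mul _ hTnorm (norm_nonneg _) (by norm_num)
            rw [Complex.norm_exp]
            calc Real.exp (T x).re ≤ Real.exp 1 := by
                  apply Real.exp_le_exp.mpr
                  calc (T x).re ≤ |(T x).re| := le_abs_self _
                    _ ≤ ‖T x‖ := Complex.abs_re_le_norm _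
                    _ ≤ 1 := by simpa [Complex.norm_def] using hTxle
              _ ≤ 3 := by
                  have := Real.exp_one_lt_d9
                  linarith
    have : 2 * ((n:ℝ) * ε) + 3 * (n * ε) ≤ 5 * (δ / 6) := by linarith
    linarith [h1, h2]
end
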